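/- arXiv:1903.06012 — 7 statements merged into one kernel-verified Lean document; each statement's English description precedes it below -/
import Mathlib

section
/- Given five distinct points in the real projective plane, no three of which are collinear, there exists a unique conic (up to scalar multiple of the defining quadratic form) passing through all five points. -/
open MvPolynomial

section Aux

open Submodule RealInnerProductSpace Module

local notation "E3" => EuclideanSpace ℝ (Fin 3)

lemma mem_orth_span {E : Type*} [NormedAddCommGroup E] [InnerProductSpace ℝ E]
    {S : Set E} {x : E} (h : ∀ u ∈ S, ⟪u, x⟫ = 0) : x ∈ (span ℝ S)ᗮ := by
  rw [Submodule.mem_orthogonal]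
  intro u hu
  induction hu using Submodule.span_induction with
  | mem u hu => exact h u hu
  | zero => simp
  | add u v _ _ hu hv => simp [inner_add_left, hu, hv]
  | smul a u _ hu => simp [inner_smul_left, hu]

lemma aux_pos (p : Fin 5 → E3) (c : Fin 5 → ℝ)
    (h : ∀ x : E3, ∑ i, c i * ⟪p i, x⟫ ^ 2 = 0)
    (x : E3) (hx : ∀ j, c j < 0 → ⟪p j, x⟫ = 0) :
    ∀ i, 0 < c i → ⟪p i, x⟫ = 0 := by
  intro i hi
  have hsub : ∑ j ∈ Finset.univ.filter (fun j => 0 < c j), c j * ⟪p j, x⟫ ^ 2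
      = ∑ j : Fin 5, c j * ⟪p j, x⟫ ^ 2 := by
    apply Finset.sum_subset (Finset.subset_univ _)
    intro j _ hj
    simp only [Finset.mem_filter, Finset.mem_univ, true_and, not_lt] at hj
    rcases lt_or_eq_of_le hj with hj' | hj'
    · rw [hx j hj']; ring
    · rw [hj']; ring
  have hsum : ∑ j ∈ Finset.univ.filter (fun j => 0 < c j), c j * ⟪p j, x⟫ ^ 2 = 0 :=
    hsub.trans (h x)
  have hterm := (Finset.sum_eq_zero_iff_of_nonneg (fun j hj => by
    simp only [Finset.mem_filter, Finset.mem_univ, true_and] at hj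
    exact mul_nonneg hj.le (sq_nonneg _))).mp hsum i (by simp [hi])
  have h2 : ⟪p i, x⟫ ^ 2 = 0 := by
    rcases mul_eq_zero.mp hterm with h' | h'
    · exact absurd h' (ne_of_gt hi)
    · exact h'
  exact pow_eq_zero_iff (by norm_num) |>.mp h2

lemma key_indep (p : Fin 5 → E3)
    (hne : ∀ i, p i ≠ 0)
    (hdist : ∀ i j, i ≠ j → ∀ d : ℝ, p i ≠ d • p j)
    (hgen : ∀ i j k : Fin 5, i ≠ j → i ≠ k → j ≠ k →
      LinearIndependent ℝ ![p i, p j, p k])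
    (c : Fin 5 → ℝ) (h : ∀ x : E3, ∑ i, c i * ⟪p i, x⟫ ^ 2 = 0) :
    ∀ i, c i = 0 := by
  by_contra hc
  push_neg at hc
  obtain ⟨i0, hi0⟩ := hc
  classical
  set A : Finset (Fin 5) := Finset.univ.filter (fun i => 0 < c i) with hA
  set B : Finset (Fin 5) := Finset.univ.filter (fun i => c i < 0) with hB
  set U : Submodule ℝ E3 := span ℝ ((A.image p : Finset E3) : Set E3) with hU
  set V : Submodule ℝ E3 := span ℝ ((B.image p : Finset E3) : Set E3) with hV
  -- the negated coefficient sum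
  have hneg : ∀ x : E3, ∑ i, (-c) i * ⟪p i, x⟫ ^ 2 = 0 := by
    intro x
    have := h x
    simp only [Pi.neg_apply, neg_mul]
    rw [Finset.sum_neg_distrib]
    rw [this]; ring
  -- orthogonal complements coincide
  have horth : Uᗮ = Vᗮ := by
    ext x
    simp only [Submodule.mem_orthogonal]
    constructor
    · intro hx
      have hxA : ∀ u ∈ ((A.image p : Finset E3) : Set E3), ⟪u, x⟫ = 0 := fun u hu =>
        hx u (subset_span hu)
      have h1 : ∀ i, 0 < c i → ⟪p i, x⟫ = 0 := by
        intro i hi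
        apply hxA
        simp only [Finset.coe_image, Set.mem_image]
        exact ⟨i, by simp [hA, hi], rfl⟩
      have h2 : ∀ j, (-c) j < 0 → ⟪p j, x⟫ = 0 := by
        intro j hj
        exact h1 j (by simpa using hj)
      have h3 := aux_pos p (-c) hneg x h2
      refine fun u hu => (Submodule.mem_orthogonal _ _).mp (mem_orth_span ?_) u hu
      intro u hu
      simp only [Finset.coe_image, Set.mem_image, Finset.mem_coe] at hu
      obtain ⟨j, hj, rfl⟩ := hu
      simp only [hB, Finset.mem_filter] at hj
      have := h3 j (by simpa using hj.2)
      exact this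
    · intro hx
      have hxB : ∀ j, c j < 0 → ⟪p j, x⟫ = 0 := by
        intro j hj
        apply hx (p j)
        apply subset_span
        simp only [Finset.coe_image, Set.mem_image, Finset.mem_coe]
        exact ⟨j, by simp [hB, hj], rfl⟩
      have h3 := aux_pos p c h x hxB
      refine fun u hu => (Submodule.mem_orthogonal _ _).mp (mem_orth_span ?_) u hu
      intro u hu
      simp only [Finset.coe_image, Set.mem_image, Finset.mem_coe] at hu
      obtain ⟨i, hi, rfl⟩ := hu
      simp only [hA, Finset.mem_filter] at hi
      exact h3 i hi.2
  have hUV : U = V := by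
    have := congrArg (fun W : Submodule ℝ E3 => Wᗮ) horth
    simpa [Submodule.orthogonal_orthogonal] using this
  -- membership of all points with nonzero coefficient
  have hmemA : ∀ i ∈ A, p i ∈ U := fun i hi =>
    subset_span (by simp only [Finset.coe_image, Set.mem_image, Finset.mem_coe]; exact ⟨i, hi, rfl⟩)
  have hmemB : ∀ j ∈ B, p j ∈ U := fun j hj => by
    rw [hUV]
    exact subset_span (by simp only [Finset.coe_image, Set.mem_image, Finset.mem_coe]; exact ⟨j, hj, rfl⟩)
  have hmem : ∀ i ∈ A ∪ B, p i ∈ U := by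
    intro i hi
    rcases Finset.mem_union.mp hi with h' | h'
    · exact hmemA i h'
    · exact hmemB i h'
  -- finrank bounds
  have hrU : finrank ℝ U ≤ A.card :=
    le_trans (finrank_span_finset_le_card _) (Finset.card_image_le)
  have hrV : finrank ℝ U ≤ B.card := by
    rw [hUV]
    exact le_trans (finrank_span_finset_le_card _) (Finset.card_image_le)
  have hdisj : Disjoint A B := by
    rw [Finset.disjoint_left]
    intro a ha hb
    simp only [hA, hB, Finset.mem_filter] at ha hb
    linarith [ha.2, hb.2]
  have hcard5 : A.card + B.card ≤ 5 := by
    have := Finset.card_le_card (Finset.subset_univ (A ∪ B))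
    rw [Finset.card_union_of_disjoint hdisj] at this
    simpa using this
  -- i0 is in A ∪ B
  have hi0mem : i0 ∈ A ∪ B := by
    rcases lt_trichotomy (c i0) 0 with h' | h' | h'
    · exact Finset.mem_union_right _ (by simp [hB, h'])
    · exact absurd h' hi0
    · exact Finset.mem_union_left _ (by simp [hA, h'])
  -- A and B are both nonempty
  have hAne : A.Nonempty := by
    by_contra hAe
    rw [Finset.not_nonempty_iff_eq_empty] at hAe
    have hUbot : U = ⊥ := by rw [hU, hAe]; simp
    rcases Finset.mem_union.mp hi0mem with h' | h'
    · rw [hAe] at h'; simp at h'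
    · have hp := hmemB i0 h'
      rw [hUbot, Submodule.mem_bot] at hp
      exact hne i0 hp
  have hBne : B.Nonempty := by
    by_contra hBe
    rw [Finset.not_nonempty_iff_eq_empty] at hBe
    have hVbot : V = ⊥ := by rw [hV, hBe]; simp
    rcases Finset.mem_union.mp hi0mem with h' | h'
    · have hp := hmemA i0 h'
      rw [hUV, hVbot, Submodule.mem_bot] at hp
      exact hne i0 hp
    · rw [hBe] at h'; simp at h'
  have hfr2 : finrank ℝ U ≤ 2 := by
    rcases le_or_gt A.card 2 with h' | h'
    · exact le_trans hrU h'
    · exact le_trans hrV (by omega)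
  -- case on card of A ∪ B
  rcases le_or_gt 3 (A ∪ B).card with hbig | hsmall
  · -- extract three distinct elements
    obtain ⟨i, hi, j, hj, hij⟩ := Finset.one_lt_card.mp (by omega : 1 < (A ∪ B).card)
    have hcard' : 0 < (((A ∪ B).erase i).erase j).card := by
      have h1 := Finset.card_erase_of_mem hi
      have h2 := Finset.card_erase_of_mem (Finset.mem_erase.mpr ⟨Ne.symm hij, hj⟩)
      omega
    obtain ⟨k, hk⟩ := Finset.card_pos.mp hcard'
    have hkj : k ≠ j := (Finset.mem_erase.mp hk).1
    have hki : k ≠ i := (Finset.mem_erase.mp (Finset.mem_erase.mp hk).2).1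
    have hkmem : k ∈ A ∪ B := (Finset.mem_erase.mp (Finset.mem_erase.mp hk).2).2
    have hli := hgen i j k hij hki.symm hkj.symm
    have hrange : Set.range ![p i, p j, p k] ⊆ (U : Set E3) := by
      rw [Set.range_subset_iff]
      intro l
      fin_cases l
      · exact hmem i hi
      · exact hmem j hj
      · exact hmem k hkmem
    have h3le : 3 ≤ finrank ℝ U := by
      have hspan := finrank_span_eq_card hli
      have hle : span ℝ (Set.range ![p i, p j, p k]) ≤ U := span_le.mpr hrange
      have := Submodule.finrank_mono hle
      rw [hspan] at this
      simpa using this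
    omega
  · -- A ∪ B has at most 2 elements, both nonempty → each singleton
    have hcardAB : (A ∪ B).card = A.card + B.card := Finset.card_union_of_disjoint hdisj
    have hAcard : A.card = 1 := by
      have := Finset.card_pos.mpr hAne
      have := Finset.card_pos.mpr hBne
      omega
    have hBcard : B.card = 1 := by
      have := Finset.card_pos.mpr hAne
      have := Finset.card_pos.mpr hBne
      omega
    obtain ⟨i, hAi⟩ := Finset.card_eq_one.mp hAcard
    obtain ⟨j, hBj⟩ := Finset.card_eq_one.mp hBcard
    have hij : i ≠ j := by
      intro hij
      have : i ∈ A := by simp [hAi]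
      have : i ∈ B := by simp [hBj, ← hij]
      exact (Finset.disjoint_left.mp hdisj (by simp [hAi]) this).elim
    have hpj : p j ∈ U := hmemB j (by simp [hBj])
    have : U = span ℝ {p i} := by
      rw [hU, hAi]
      simp
    rw [this, mem_span_singleton] at hpj
    obtain ⟨d, hd⟩ := hpj
    exact hdist j i hij.symm d hd.symm

end Aux

section Poly

def mtab : Fin 6 → Fin 3 → ℕ :=
  ![![2,0,0], ![0,2,0], ![0,0,2], ![1,1,0], ![1,0,1], ![0,1,1]]

noncomputable def mexp (k : Fin 6) : Fin 3 →₀ ℕ :=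
  Finsupp.equivFunOnFinite.symm (mtab k)

lemma mexp_apply (k : Fin 6) : ⇑(mexp k) = mtab k := rfl

lemma mexp_inj : Function.Injective mexp := by
  intro k k' h
  have h2 : mtab k = mtab k' := by rw [← mexp_apply, ← mexp_apply, h]
  exact (by decide : ∀ k k' : Fin 6, mtab k = mtab k' → k = k') k k' h2

lemma mexp_degree (k : Fin 6) : (mexp k).degree = 2 := by
  have h1 : (mexp k).degree = ∑ i : Fin 3, mexp k i := by
    rw [Finsupp.degree]
    exact Finset.sum_subset (Finset.subset_univ _)
      (fun i _ hi => by simpa [Finsupp.mem_support_iff] using hi)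
  rw [h1, Fin.sum_univ_three, mexp_apply]
  exact (by decide : ∀ k : Fin 6, mtab k 0 + mtab k 1 + mtab k 2 = 2) k

lemma degree_two_eq_mexp (d : Fin 3 →₀ ℕ) (hd : d.degree = 2) : ∃ k : Fin 6, d = mexp k := by
  have hsum : d 0 + d 1 + d 2 = 2 := by
    have h1 : d.degree = ∑ i : Fin 3, d i := by
      rw [Finsupp.degree]
      exact Finset.sum_subset (Finset.subset_univ _)
        (fun i _ hi => by simpa [Finsupp.mem_support_iff] using hi)
    rw [h1, Fin.sum_univ_three] at hd
    exact hd
  have keyeq : ∀ (g : Fin 3 →₀ ℕ), d 0 = g 0 → d 1 = g 1 → d 2 = g 2 → d = g := by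
    intro g h0 h1 h2
    ext i
    obtain ⟨v, hv⟩ := i
    interval_cases v
    · exact h0
    · exact h1
    · exact h2
  have hcases : (d 0 = 2 ∧ d 1 = 0 ∧ d 2 = 0) ∨ (d 0 = 0 ∧ d 1 = 2 ∧ d 2 = 0) ∨
      (d 0 = 0 ∧ d 1 = 0 ∧ d 2 = 2) ∨ (d 0 = 1 ∧ d 1 = 1 ∧ d 2 = 0) ∨
      (d 0 = 1 ∧ d 1 = 0 ∧ d 2 = 1) ∨ (d 0 = 0 ∧ d 1 = 1 ∧ d 2 = 1) := by omega
  rcases hcases with ⟨h0,h1,h2⟩|⟨h0,h1,h2⟩|⟨h0,h1,h2⟩|⟨h0,h1,h2⟩|⟨h0,h1,h2⟩|⟨h0,h1,h2⟩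
  · exact ⟨0, keyeq _ (by rw [h0]; rfl) (by rw [h1]; rfl) (by rw [h2]; rfl)⟩
  · exact ⟨1, keyeq _ (by rw [h0]; rfl) (by rw [h1]; rfl) (by rw [h2]; rfl)⟩
  · exact ⟨2, keyeq _ (by rw [h0]; rfl) (by rw [h1]; rfl) (by rw [h2]; rfl)⟩
  · exact ⟨3, keyeq _ (by rw [h0]; rfl) (by rw [h1]; rfl) (by rw [h2]; rfl)⟩
  · exact ⟨4, keyeq _ (by rw [h0]; rfl) (by rw [h1]; rfl) (by rw [h2]; rfl)⟩
  · exact ⟨5, keyeq _ (by rw [h0]; rfl) (by rw [h1]; rfl) (by rw [h2]; rfl)⟩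

def ver (x : Fin 3 → ℝ) : Fin 6 → ℝ :=
  ![x 0 ^ 2, x 1 ^ 2, x 2 ^ 2, x 0 * x 1, x 0 * x 2, x 1 * x 2]

lemma monomial_eval (x : Fin 3 → ℝ) (k : Fin 6) :
    (∏ i : Fin 3, x i ^ (mexp k) i) = ver x k := by
  rw [Fin.prod_univ_three, mexp_apply]
  fin_cases k
  · show x 0 ^ 2 * x 1 ^ 0 * x 2 ^ 0 = x 0 ^ 2; ring
  · show x 0 ^ 0 * x 1 ^ 2 * x 2 ^ 0 = x 1 ^ 2; ring
  · show x 0 ^ 0 * x 1 ^ 0 * x 2 ^ 2 = x 2 ^ 2; ring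
  · show x 0 ^ 1 * x 1 ^ 1 * x 2 ^ 0 = x 0 * x 1; ring
  · show x 0 ^ 1 * x 1 ^ 0 * x 2 ^ 1 = x 0 * x 2; ring
  · show x 0 ^ 0 * x 1 ^ 1 * x 2 ^ 1 = x 1 * x 2; ring

lemma eval_eq_sum (Q : MvPolynomial (Fin 3) ℝ) (hQ : Q.IsHomogeneous 2) (x : Fin 3 → ℝ) :
    eval x Q = ∑ k : Fin 6, coeff (mexp k) Q * ver x k := by
  have hsup : Q.support ⊆ Finset.univ.image mexp := by
    intro d hd
    have hco : coeff d Q ≠ 0 := MvPolynomial.mem_support_iff.mp hd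
    have hdeg : d.degree = 2 := by
      have h2 := hQ hco
      simpa [Finsupp.degree_eq_weight_one, Pi.one_def] using h2
    obtain ⟨k, hk⟩ := degree_two_eq_mexp d hdeg
    exact Finset.mem_image.mpr ⟨k, Finset.mem_univ k, hk.symm⟩
  calc eval x Q = ∑ d ∈ Q.support, coeff d Q * ∏ i : Fin 3, x i ^ d i := by
        conv_lhs => rw [Q.as_sum]
        rw [map_sum]
        refine Finset.sum_congr rfl fun d _ => ?_
        rw [eval_monomial]
        congr 1
        exact Finsupp.prod_fintype _ _ (fun i => pow_zero _)
    _ = ∑ d ∈ Finset.univ.image mexp, coeff d Q * ∏ i : Fin 3, x i ^ d i :=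
        Finset.sum_subset hsup (fun d _ hd => by
          rw [MvPolynomial.notMem_support_iff.mp hd]; ring)
    _ = ∑ k : Fin 6, coeff (mexp k) Q * ∏ i : Fin 3, x i ^ (mexp k) i :=
        Finset.sum_image (fun k _ k' _ h => mexp_inj h)
    _ = ∑ k : Fin 6, coeff (mexp k) Q * ver x k := by
        refine Finset.sum_congr rfl fun k _ => ?_
        rw [monomial_eval]

lemma coeff_sum_monomial (w : Fin 6 → ℝ) (k : Fin 6) :
    coeff (mexp k) (∑ k' : Fin 6, monomial (mexp k') (w k')) = w k := by
  rw [MvPolynomial.coeff_sum, Finset.sum_eq_single k]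
  · rw [coeff_monomial, if_pos rfl]
  · intro k' _ hk'
    rw [coeff_monomial, if_neg (fun h => hk' (mexp_inj h))]
  · intro h
    exact absurd (Finset.mem_univ k) h

lemma exists_coeff_mexp_ne (Q : MvPolynomial (Fin 3) ℝ) (hQ : Q.IsHomogeneous 2)
    (hne : Q ≠ 0) : ∃ k : Fin 6, coeff (mexp k) Q ≠ 0 := by
  obtain ⟨d, hd⟩ := MvPolynomial.support_nonempty.mpr hne
  have hco : coeff d Q ≠ 0 := MvPolynomial.mem_support_iff.mp hd
  have hdeg : d.degree = 2 := by
    have h2 := hQ hco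
    simpa [Finsupp.degree_eq_weight_one, Pi.one_def] using h2
  obtain ⟨k, hk⟩ := degree_two_eq_mexp d hdeg
  exact ⟨k, hk ▸ hco⟩

end Poly

section Glue

open Submodule RealInnerProductSpace Module

lemma inner_E3 (y : Fin 3 → ℝ) (x : EuclideanSpace ℝ (Fin 3)) :
    ⟪((WithLp.equiv 2 (Fin 3 → ℝ)).symm y : EuclideanSpace ℝ (Fin 3)), x⟫ =
      y 0 * x 0 + y 1 * x 1 + y 2 * x 2 := by
  simp [PiLp.inner_apply, RCLike.inner_apply, conj_trivial, Fin.sum_univ_three,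
    WithLp.equiv_symm_apply, PiLp.toLp_apply]
  ring

lemma ver_indep (pts : Fin 5 → (Fin 3 → ℝ))
    (hne : ∀ i, pts i ≠ 0)
    (hdist : ∀ i j, i ≠ j → ∀ c : ℝ, pts i ≠ c • pts j)
    (hgen : ∀ i j k : Fin 5, i ≠ j → i ≠ k → j ≠ k →
      LinearIndependent ℝ ![pts i, pts j, pts k]) :
    LinearIndependent ℝ
      (fun i => ((WithLp.equiv 2 (Fin 6 → ℝ)).symm (ver (pts i)) : EuclideanSpace ℝ (Fin 6))) := by
  rw [Fintype.linearIndependent_iff]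
  intro g hg
  set p : Fin 5 → EuclideanSpace ℝ (Fin 3) :=
    fun i => (WithLp.equiv 2 (Fin 3 → ℝ)).symm (pts i) with hp
  have hpe : ∀ i, p i = pts i := fun i => rfl
  -- transfer hypotheses
  have hne' : ∀ i, p i ≠ 0 := by
    intro i h
    apply hne i
    have := congrArg (WithLp.equiv 2 (Fin 3 → ℝ)) h
    simpa [hp] using this
  have hdist' : ∀ i j, i ≠ j → ∀ c : ℝ, p i ≠ c • p j := by
    intro i j hij c h
    apply hdist i j hij c
    have := congrArg (WithLp.equiv 2 (Fin 3 → ℝ)) h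
    simpa [hp] using this
  have hgen' : ∀ i j k : Fin 5, i ≠ j → i ≠ k → j ≠ k →
      LinearIndependent ℝ ![p i, p j, p k] := by
    intro i j k hij hik hjk
    have h0 := (hgen i j k hij hik hjk).map'
      ((WithLp.linearEquiv 2 ℝ (Fin 3 → ℝ)).symm :
        (Fin 3 → ℝ) →ₗ[ℝ] EuclideanSpace ℝ (Fin 3)) (LinearEquiv.ker _)
    have heq : (fun l => ((WithLp.linearEquiv 2 ℝ (Fin 3 → ℝ)).symm :
        (Fin 3 → ℝ) →ₗ[ℝ] EuclideanSpace ℝ (Fin 3)) (![pts i, pts j, pts k] l))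
        = ![p i, p j, p k] := by
      funext l
      fin_cases l <;> rfl
    rw [← heq]
    exact h0
  -- componentwise equations
  have hk : ∀ k : Fin 6, ∑ i : Fin 5, g i * ver (pts i) k = 0 := by
    intro k
    have := congrArg (fun z : EuclideanSpace ℝ (Fin 6) => z k) hg
    simpa [Finset.sum_apply, PiLp.smul_apply, WithLp.equiv_symm_apply, PiLp.toLp_apply,
      smul_eq_mul] using this
  have h0 : ∑ i : Fin 5, g i * (pts i 0) ^ 2 = 0 := hk 0
  have h1 : ∑ i : Fin 5, g i * (pts i 1) ^ 2 = 0 := hk 1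
  have h2 : ∑ i : Fin 5, g i * (pts i 2) ^ 2 = 0 := hk 2
  have h3 : ∑ i : Fin 5, g i * (pts i 0 * pts i 1) = 0 := hk 3
  have h4 : ∑ i : Fin 5, g i * (pts i 0 * pts i 2) = 0 := hk 4
  have h5 : ∑ i : Fin 5, g i * (pts i 1 * pts i 2) = 0 := hk 5
  apply key_indep p hne' hdist' hgen' g
  intro x
  have hinner : ∀ i : Fin 5, ⟪p i, x⟫ = pts i 0 * x 0 + pts i 1 * x 1 + pts i 2 * x 2 :=
    fun i => inner_E3 (pts i) x
  rw [Fin.sum_univ_five] at h0 h1 h2 h3 h4 h5 ⊢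
  simp only [hinner]
  linear_combination (x 0 ^ 2) * h0 + (x 1 ^ 2) * h1 + (x 2 ^ 2) * h2 +
    (2 * x 0 * x 1) * h3 + (2 * x 0 * x 2) * h4 + (2 * x 1 * x 2) * h5

end Glue

open Submodule RealInnerProductSpace Module in
/-- Five distinct points of the real projective plane, no three of which are collinear
(i.e. any three representative vectors are linearly independent), determine a unique
conic passing through them, where a conic is the zero set of a nonzero homogeneous
quadratic form in three variables and uniqueness is up to a nonzero scalar multiple
of the defining form. -/
theorem five_points_unique_conic
    (pts : Fin 5 → (Fin 3 → ℝ))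
    (hne : ∀ i, pts i ≠ 0)
    (hdist : ∀ i j, i ≠ j → ∀ c : ℝ, pts i ≠ c • pts j)
    (hgen : ∀ i j k : Fin 5, i ≠ j → i ≠ k → j ≠ k →
      LinearIndependent ℝ ![pts i, pts j, pts k]) :
    ∃ Q : MvPolynomial (Fin 3) ℝ,
      (Q ≠ 0 ∧ Q.IsHomogeneous 2 ∧ ∀ i, eval (pts i) Q = 0) ∧
      ∀ Q' : MvPolynomial (Fin 3) ℝ,
        (Q' ≠ 0 ∧ Q'.IsHomogeneous 2 ∧ ∀ i, eval (pts i) Q' = 0) →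
        ∃ c : ℝ, c ≠ 0 ∧ Q' = c • Q := by
  classical
  -- Existence: kernel of the evaluation map on coefficient space is nontrivial
  set L : (Fin 6 → ℝ) →ₗ[ℝ] (Fin 5 → ℝ) :=
    LinearMap.pi (fun i => ∑ k : Fin 6, ver (pts i) k • LinearMap.proj k) with hL
  have hLapp : ∀ (w : Fin 6 → ℝ) (i : Fin 5), L w i = ∑ k : Fin 6, ver (pts i) k * w k := by
    intro w i
    simp [hL, LinearMap.pi_apply, LinearMap.sum_apply, LinearMap.smul_apply,
      LinearMap.proj_apply, smul_eq_mul]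
  have hker : LinearMap.ker L ≠ ⊥ := by
    intro hbot
    have hinj : Function.Injective L := LinearMap.ker_eq_bot.mp hbot
    have h6 := LinearMap.finrank_le_finrank_of_injective hinj
    rw [Module.finrank_fin_fun, Module.finrank_fin_fun] at h6
    omega
  obtain ⟨w, hwker, hwne⟩ := Submodule.exists_mem_ne_zero_of_ne_bot hker
  have hweval : ∀ i, ∑ k : Fin 6, ver (pts i) k * w k = 0 := by
    intro i
    rw [← hLapp]
    rw [LinearMap.mem_ker] at hwker
    rw [hwker]
    rfl
  set Q : MvPolynomial (Fin 3) ℝ := ∑ k : Fin 6, monomial (mexp k) (w k) with hQdef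
  have hQhom : Q.IsHomogeneous 2 :=
    MvPolynomial.IsHomogeneous.sum _ _ _ (fun k _ => isHomogeneous_monomial _ (mexp_degree k))
  have hQcoeff : ∀ k, coeff (mexp k) Q = w k := coeff_sum_monomial w
  have hQne : Q ≠ 0 := by
    obtain ⟨k, hk⟩ := Function.ne_iff.mp hwne
    intro h
    apply hk
    rw [← hQcoeff k, h]
    simp
  have hQeval : ∀ i, eval (pts i) Q = 0 := by
    intro i
    rw [eval_eq_sum Q hQhom]
    simp_rw [hQcoeff]
    rw [Finset.sum_congr rfl fun k _ => mul_comm (w k) (ver (pts i) k)]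
    exact hweval i
  refine ⟨Q, ⟨hQne, hQhom, hQeval⟩, ?_⟩
  -- Uniqueness
  rintro Q' ⟨hQ'ne, hQ'hom, hQ'eval⟩
  set vE : Fin 5 → EuclideanSpace ℝ (Fin 6) :=
    fun i => (WithLp.equiv 2 (Fin 6 → ℝ)).symm (ver (pts i)) with hvE
  have hvind : LinearIndependent ℝ vE := ver_indep pts hne hdist hgen
  set W : Submodule ℝ (EuclideanSpace ℝ (Fin 6)) := (span ℝ (Set.range vE))ᗮ with hW
  have hWrank : finrank ℝ W = 1 := by
    have hadd := Submodule.finrank_add_finrank_orthogonal (span ℝ (Set.range vE))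
    have hspan : finrank ℝ (span ℝ (Set.range vE)) = 5 := by
      rw [finrank_span_eq_card hvind]
      simp
    rw [hspan, finrank_euclideanSpace_fin] at hadd
    rw [hW]
    omega
  -- membership of the coefficient vectors
  have hmem : ∀ (P : MvPolynomial (Fin 3) ℝ), P.IsHomogeneous 2 → (∀ i, eval (pts i) P = 0) →
      ((WithLp.equiv 2 (Fin 6 → ℝ)).symm (fun k => coeff (mexp k) P)
        : EuclideanSpace ℝ (Fin 6)) ∈ W := by
    intro P hPhom hPeval
    apply mem_orth_span
    rintro u ⟨i, rfl⟩
    have : ⟪vE i, ((WithLp.equiv 2 (Fin 6 → ℝ)).symm (fun k => coeff (mexp k) P)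
        : EuclideanSpace ℝ (Fin 6))⟫ = ∑ k : Fin 6, ver (pts i) k * coeff (mexp k) P := by
      simp [hvE, PiLp.inner_apply, RCLike.inner_apply, conj_trivial,
        WithLp.equiv_symm_apply, PiLp.toLp_apply]
      exact Finset.sum_congr rfl fun k _ => mul_comm _ _
    rw [this]
    rw [Finset.sum_congr rfl fun k _ => mul_comm (ver (pts i) k) (coeff (mexp k) P)]
    rw [← eval_eq_sum P hPhom]
    exact hPeval i
  set wE : EuclideanSpace ℝ (Fin 6) :=
    (WithLp.equiv 2 (Fin 6 → ℝ)).symm (fun k => coeff (mexp k) Q) with hwE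
  set wE' : EuclideanSpace ℝ (Fin 6) :=
    (WithLp.equiv 2 (Fin 6 → ℝ)).symm (fun k => coeff (mexp k) Q') with hwE'
  have hmemQ : wE ∈ W := hmem Q hQhom hQeval
  have hmemQ' : wE' ∈ W := hmem Q' hQ'hom hQ'eval
  have hxne : (⟨wE, hmemQ⟩ : W) ≠ 0 := by
    obtain ⟨k, hk⟩ := exists_coeff_mexp_ne Q hQhom hQne
    intro h
    apply hk
    have : wE = 0 := congrArg Subtype.val h
    have := congrArg (fun z : EuclideanSpace ℝ (Fin 6) => z k) this
    simpa [hwE, WithLp.equiv_symm_apply, PiLp.toLp_apply] using this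
  obtain ⟨c, hc⟩ := exists_smul_eq_of_finrank_eq_one hWrank hxne (⟨wE', hmemQ'⟩ : W)
  have hcoeffs : ∀ k, coeff (mexp k) Q' = c * coeff (mexp k) Q := by
    intro k
    have h1 : c • wE = wE' := congrArg Subtype.val hc
    have := congrArg (fun z : EuclideanSpace ℝ (Fin 6) => z k) h1
    simpa [hwE, hwE', WithLp.equiv_symm_apply, PiLp.toLp_apply, PiLp.smul_apply, smul_eq_mul] using this.symm
  have hcne : c ≠ 0 := by
    intro hc0
    apply hQ'ne
    obtain ⟨k, hk⟩ := exists_coeff_mexp_ne Q' hQ'hom hQ'ne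
    exact absurd (by rw [hcoeffs k, hc0, zero_mul]) hk
  refine ⟨c, hcne, ?_⟩
  apply MvPolynomial.funext
  intro x
  rw [MvPolynomial.smul_eval, eval_eq_sum Q hQhom x, eval_eq_sum Q' hQ'hom x, Finset.mul_sum]
  refine Finset.sum_congr rfl fun k _ => ?_
  rw [hcoeffs k]
  ring
end

section
/- Given any finite set of points in the real plane such that no three are collinear and no four are concyclic, any two distinct 3-element subsets of these points determine distinct circumscribed circles; consequently, every lineal combinatorial 3-configuration admits a geometric realization as a point-circle configuration. -/
open EuclideanGeometry

private lemma cancel_factor' {x y : ℝ} (hx : x ≠ 0) (h : x * y = 0) : y = 0 := by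
  rcases mul_eq_zero.mp h with h | h
  · exact absurd h hx
  · exact h

/-- Four distinct reals ≥ 1 cannot all satisfy a common circle equation on the parabola. -/
private lemma parab_four' {a b c d p q R : ℝ} (ha : 1 ≤ a) (hb : 1 ≤ b) (hc : 1 ≤ c) (hd : 1 ≤ d)
    (hab : a ≠ b) (hac : a ≠ c) (had : a ≠ d) (hbc : b ≠ c) (hbd : b ≠ d) (hcd : c ≠ d)
    (e1 : (a - p)^2 + (a^2 - q)^2 = R) (e2 : (b - p)^2 + (b^2 - q)^2 = R)
    (e3 : (c - p)^2 + (c^2 - q)^2 = R) (e4 : (d - p)^2 + (d^2 - q)^2 = R) : False := by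
  have Gab : a^3 + a^2*b + a*b^2 + b^3 + (a+b)*(1-2*q) - 2*p = 0 :=
    cancel_factor' (sub_ne_zero.mpr hab) (by linear_combination e1 - e2)
  have Gac : a^3 + a^2*c + a*c^2 + c^3 + (a+c)*(1-2*q) - 2*p = 0 :=
    cancel_factor' (sub_ne_zero.mpr hac) (by linear_combination e1 - e3)
  have Gad : a^3 + a^2*d + a*d^2 + d^3 + (a+d)*(1-2*q) - 2*p = 0 :=
    cancel_factor' (sub_ne_zero.mpr had) (by linear_combination e1 - e4)
  have Hbc : a^2 + a*(b+c) + b^2 + b*c + c^2 + 1 - 2*q = 0 :=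
    cancel_factor' (sub_ne_zero.mpr hbc) (by linear_combination Gab - Gac)
  have Hbd : a^2 + a*(b+d) + b^2 + b*d + d^2 + 1 - 2*q = 0 :=
    cancel_factor' (sub_ne_zero.mpr hbd) (by linear_combination Gab - Gad)
  have hsum : a + b + c + d = 0 :=
    cancel_factor' (sub_ne_zero.mpr hcd) (by linear_combination Hbc - Hbd)
  linarith

/-- Three points on the parabola with distinct parameters are not collinear. -/
private lemma parab_three' {a b c : ℝ}
    (hab : a ≠ b) (hac : a ≠ c) (hbc : b ≠ c)
    (h : Collinear ℝ ({!₂[a, a^2], !₂[b, b^2], !₂[c, c^2]} : Set (EuclideanSpace ℝ (Fin 2)))) :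
    False := by
  rw [collinear_iff_of_mem (Set.mem_insert _ _)] at h
  obtain ⟨v, hv⟩ := h
  obtain ⟨rb, hrb⟩ := hv _ (by simp : (!₂[b, b^2] : EuclideanSpace ℝ (Fin 2)) ∈ _)
  obtain ⟨rc, hrc⟩ := hv _ (by simp : (!₂[c, c^2] : EuclideanSpace ℝ (Fin 2)) ∈ _)
  have hb0 : b = rb * v 0 + a := congrArg (fun w : EuclideanSpace ℝ (Fin 2) => w 0) hrb
  have hb1 : b^2 = rb * v 1 + a^2 := congrArg (fun w : EuclideanSpace ℝ (Fin 2) => w 1) hrb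
  have hc0 : c = rc * v 0 + a := congrArg (fun w : EuclideanSpace ℝ (Fin 2) => w 0) hrc
  have hc1 : c^2 = rc * v 1 + a^2 := congrArg (fun w : EuclideanSpace ℝ (Fin 2) => w 1) hrc
  have key : (b - a) * (c^2 - a^2) = (c - a) * (b^2 - a^2) := by
    have h1 : b - a = rb * v 0 := by linarith
    have h2 : b^2 - a^2 = rb * v 1 := by linarith
    have h3 : c - a = rc * v 0 := by linarith
    have h4 : c^2 - a^2 = rc * v 1 := by linarith
    rw [h1, h2, h3, h4]; ring
  have hz : (b - a) * (c - a) * (c - b) = 0 := by linear_combination key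
  rcases mul_eq_zero.mp hz with h' | h'
  · rcases mul_eq_zero.mp h' with h' | h'
    · exact hab (by linarith)
    · exact hac (by linarith)
  · exact hbc (by linarith)

private lemma dist_sq_plane' (x c : EuclideanSpace ℝ (Fin 2)) :
    dist x c ^ 2 = (x 0 - c 0)^2 + (x 1 - c 1)^2 := by
  rw [EuclideanSpace.dist_eq, Real.sq_sqrt (by positivity)]
  simp [Fin.sum_univ_two, Real.dist_eq, sq_abs]

private lemma circum_exists' (A B C : EuclideanSpace ℝ (Fin 2))
    (h : ¬ Collinear ℝ ({A, B, C} : Set (EuclideanSpace ℝ (Fin 2)))) :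
    ∃ ctr rad, 0 < rad ∧ dist A ctr = rad ∧ dist B ctr = rad ∧ dist C ctr = rad := by
  have hai : AffineIndependent ℝ ![A, B, C] := affineIndependent_iff_not_collinear_set.mpr h
  let T : Affine.Simplex ℝ (EuclideanSpace ℝ (Fin 2)) 2 := ⟨![A, B, C], hai⟩
  have hA : dist A T.circumcenter = T.circumradius := T.dist_circumcenter_eq_circumradius 0
  have hB : dist B T.circumcenter = T.circumradius := T.dist_circumcenter_eq_circumradius 1
  have hC : dist C T.circumcenter = T.circumradius := T.dist_circumcenter_eq_circumradius 2
  have hAB : A ≠ B := by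
    rintro rfl
    exact h (by simpa using (collinear_pair ℝ A C).subset (by intro x hx; simpa using hx))
  refine ⟨T.circumcenter, T.circumradius, ?_, hA, hB, hC⟩
  rcases lt_or_eq_of_le (dist_nonneg.trans_eq hA) with hlt | heq
  · exact hlt
  · exfalso
    apply hAB
    have ha : A = T.circumcenter := dist_eq_zero.mp (hA.trans heq.symm)
    have hb : B = T.circumcenter := dist_eq_zero.mp (hB.trans heq.symm)
    rw [ha, hb]

/-- (a) For any finite set of points of the real plane with no three collinear and no
four concyclic, two distinct 3-element subsets never lie on a common circle (hence
determine distinct circumscribed circles).  (b) Consequently, every lineal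
combinatorial 3-configuration admits a geometric realization by points and circles:
distinct plane points for the configuration points and circles (centre, positive
radius) for the blocks, with incidence corresponding to lying on the circle. -/
theorem lineal_three_configuration_point_circle_realizable :
    (∀ pts : Finset (EuclideanSpace ℝ (Fin 2)),
      (∀ a ∈ pts, ∀ b ∈ pts, ∀ c ∈ pts, a ≠ b → a ≠ c → b ≠ c →
        ¬ Collinear ℝ ({a, b, c} : Set (EuclideanSpace ℝ (Fin 2)))) →
      (∀ a ∈ pts, ∀ b ∈ pts, ∀ c ∈ pts, ∀ d ∈ pts,
        a ≠ b → a ≠ c → a ≠ d → b ≠ c → b ≠ d → c ≠ d →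
        ¬ Cospherical ({a, b, c, d} : Set (EuclideanSpace ℝ (Fin 2)))) →
      ∀ S T : Finset (EuclideanSpace ℝ (Fin 2)),
        S ⊆ pts → T ⊆ pts → S.card = 3 → T.card = 3 → S ≠ T →
        ∀ (c : EuclideanSpace ℝ (Fin 2)) (r : ℝ),
          ¬ ((∀ x ∈ S, dist x c = r) ∧ (∀ x ∈ T, dist x c = r))) ∧
    (∀ (P B : Type) (_ : Fintype P) (_ : Fintype B) (I : P → B → Prop),
      (∀ p : P, Set.ncard {b : B | I p b} = 3) →
      (∀ b : B, Set.ncard {p : P | I p b} = 3) →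
      (∀ p₁ p₂ : P, ∀ b₁ b₂ : B, p₁ ≠ p₂ →
        I p₁ b₁ → I p₂ b₁ → I p₁ b₂ → I p₂ b₂ → b₁ = b₂) →
      ∃ (f : P → EuclideanSpace ℝ (Fin 2))
        (ctr : B → EuclideanSpace ℝ (Fin 2)) (rad : B → ℝ),
        Function.Injective f ∧ (∀ b, 0 < rad b) ∧
        ∀ p b, I p b ↔ dist (f p) (ctr b) = rad b) := by
  classical
  constructor
  · -- Part (a)
    intro pts _hcol hsph S T hS hT hScard hTcard hne c r ⟨h1, h2⟩
    have hTS : ¬ T ⊆ S := by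
      intro h
      exact hne (Finset.eq_of_subset_of_card_le h (hTcard ▸ hScard.le)).symm
    obtain ⟨x, hxT, hxS⟩ := Finset.not_subset.mp hTS
    obtain ⟨a, b, c', hab, hac, hbc, hSeq⟩ := Finset.card_eq_three.mp hScard
    have haS : a ∈ S := by rw [hSeq]; simp
    have hbS : b ∈ S := by rw [hSeq]; simp
    have hcS : c' ∈ S := by rw [hSeq]; simp
    have hax : a ≠ x := fun h => hxS (h ▸ haS)
    have hbx : b ≠ x := fun h => hxS (h ▸ hbS)
    have hcx : c' ≠ x := fun h => hxS (h ▸ hcS)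
    refine hsph a (hS haS) b (hS hbS) c' (hS hcS) x (hT hxT)
      hab hac hax hbc hbx hcx ⟨c, r, ?_⟩
    rintro p hp
    rcases hp with rfl | rfl | rfl | rfl
    · exact h1 _ haS
    · exact h1 _ hbS
    · exact h1 _ hcS
    · exact h2 _ hxT
  · -- Part (b)
    intro P B instP _instB I _hP hB _hlin
    -- parameter values on the parabola
    let e := Fintype.equivFin P
    let tf : P → ℝ := fun p => ((e p : ℕ) : ℝ) + 1
    have htf1 : ∀ p, 1 ≤ tf p := fun p => by
      simp only [tf, le_add_iff_nonneg_left]; positivity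
    have htfinj : Function.Injective tf := by
      intro p p' h
      apply e.injective
      have : ((e p : ℕ) : ℝ) = ((e p' : ℕ) : ℝ) := by
        simpa [tf] using h
      exact Fin.ext (Nat.cast_injective this)
    let f : P → EuclideanSpace ℝ (Fin 2) := fun p => !₂[tf p, (tf p)^2]
    have hf0 : ∀ p, f p 0 = tf p := fun p => rfl
    have hf1 : ∀ p, f p 1 = (tf p)^2 := fun p => rfl
    have hfinj : Function.Injective f := by
      intro p p' h
      exact htfinj (by rw [← hf0 p, ← hf0 p', h])
    have hex : ∀ b : B, ∃ (ctr : EuclideanSpace ℝ (Fin 2)) (rad : ℝ),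
        0 < rad ∧ ∀ p, I p b ↔ dist (f p) ctr = rad := by
      intro b
      obtain ⟨p₁, p₂, p₃, h12, h13, h23, hset⟩ := Set.ncard_eq_three.mp (hB b)
      have ht12 : tf p₁ ≠ tf p₂ := fun h => h12 (htfinj h)
      have ht13 : tf p₁ ≠ tf p₃ := fun h => h13 (htfinj h)
      have ht23 : tf p₂ ≠ tf p₃ := fun h => h23 (htfinj h)
      have hnc : ¬ Collinear ℝ ({f p₁, f p₂, f p₃} : Set (EuclideanSpace ℝ (Fin 2))) :=
        fun h => parab_three' ht12 ht13 ht23 h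
      obtain ⟨ctr, rad, hpos, hd1, hd2, hd3⟩ := circum_exists' (f p₁) (f p₂) (f p₃) hnc
      refine ⟨ctr, rad, hpos, fun p => ⟨?_, ?_⟩⟩
      · intro hpb
        have : p ∈ ({p₁, p₂, p₃} : Set P) := hset ▸ hpb
        rcases this with rfl | rfl | rfl
        · exact hd1
        · exact hd2
        · exact hd3
      · intro hd
        by_contra hpb
        have hp1 : p ≠ p₁ := by rintro rfl; exact hpb (by
          have : p ∈ ({p, p₂, p₃} : Set P) := by simp
          rw [← hset] at this; exact this)
        have hp2 : p ≠ p₂ := by rintro rfl; exact hpb (by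
          have : p ∈ ({p₁, p, p₃} : Set P) := by simp
          rw [← hset] at this; exact this)
        have hp3 : p ≠ p₃ := by rintro rfl; exact hpb (by
          have : p ∈ ({p₁, p₂, p} : Set P) := by simp
          rw [← hset] at this; exact this)
        have sq : ∀ x : EuclideanSpace ℝ (Fin 2), dist x ctr = rad →
            (x 0 - ctr 0)^2 + (x 1 - ctr 1)^2 = rad^2 := by
          intro x hx
          rw [← dist_sq_plane', hx]
        have e1 := sq _ hd1
        have e2 := sq _ hd2
        have e3 := sq _ hd3
        have e4 := sq _ hd
        rw [hf0, hf1] at e1 e2 e3 e4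
        exact parab_four' (htf1 p₁) (htf1 p₂) (htf1 p₃) (htf1 p)
          ht12 ht13 (fun h => hp1 (htfinj h).symm) ht23
          (fun h => hp2 (htfinj h).symm) (fun h => hp3 (htfinj h).symm)
          e1 e2 e3 e4
    choose ctr rad hpos hiff using hex
    exact ⟨f, ctr, rad, hfinj, hpos, fun p b => hiff b p⟩
end

section
/- For every finite bipartite graph G = (P ∪ B, E) in which every vertex of B has degree at most 5 and which contains no K_{5,2} subgraph (five vertices of P joined to two vertices of B), there is an assignment of distinct points of the real plane to P and of conics to B such that a vertex p ∈ P is adjacent to b ∈ B if and only if the point assigned to p lies on the conic assigned to b. -/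
open MvPolynomial

lemma Multiset.esymm_one' (s : Multiset ℝ) : s.esymm 1 = s.sum := by
  rw [Multiset.esymm, Multiset.powersetCard_one, Multiset.map_map]
  simp

/-- Through any set of at most 5 of the points `(t p, t p ^ 3)` (with `t` injective and
`t p ≥ 11`) there is a conic avoiding all the other points. -/
lemma conic_through {P : Type*} [Fintype P] (t : P → ℝ) (htinj : Function.Injective t)
    (ht : ∀ p, 11 ≤ t p) (S : Finset P) (hS : S.card ≤ 5) :
    ∃ Q : MvPolynomial (Fin 2) ℝ, Q.totalDegree = 2 ∧
      ∀ p : P, (eval ![t p, (t p) ^ 3] Q = 0 ↔ p ∈ S) := by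
  classical
  set k := S.card with hk
  set sT : ℝ := ∑ p ∈ S, t p with hsT
  have hsT0 : 0 ≤ sT := Finset.sum_nonneg fun p _ => le_trans (by norm_num) (ht p)
  set a₀ : ℝ := ((5 - k : ℕ) : ℝ) - sT with ha₀
  have ha₀le : a₀ ≤ 5 := by
    have : ((5 - k : ℕ) : ℝ) ≤ 5 := by
      exact_mod_cast Nat.cast_le.mpr (Nat.sub_le 5 k) |>.trans (by norm_num)
    linarith
  -- the multiset of roots
  set s : Multiset ℝ := Multiset.replicate (5 - k) (-1) + {a₀} + S.val.map t with hs
  have hcard : Multiset.card s = 6 := by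
    simp [hs, Multiset.card_replicate]
    omega
  have hsum : s.sum = 0 := by
    rw [hs, Multiset.sum_add, Multiset.sum_add, Multiset.sum_replicate, Multiset.sum_singleton]
    have hmap : (S.val.map t).sum = sT := rfl
    rw [hmap, ha₀, nsmul_eq_mul, Nat.cast_sub hS]
    push_cast
    ring
  set g : Polynomial ℝ := (s.map fun r => Polynomial.X - Polynomial.C r).prod with hg
  have hdeg : g.natDegree ≤ 6 := by
    refine le_trans (Polynomial.natDegree_multiset_prod_le _) ?_
    rw [Multiset.map_map]
    have : ((s.map fun r => ((Polynomial.X - Polynomial.C r).natDegree))).sum ≤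
        (s.map fun _ => 1).sum := by
      apply Multiset.sum_map_le_sum_map
      intro r _
      exact le_of_eq (Polynomial.natDegree_X_sub_C r)
    simpa [Multiset.map_const', Multiset.sum_replicate, hcard] using this
  have hc6 : g.coeff 6 = 1 := by
    have := Multiset.prod_X_sub_C_coeff s (k := 6) (by rw [hcard])
    rw [hcard] at this
    simpa [Multiset.esymm] using this
  have hc5 : g.coeff 5 = 0 := by
    have := Multiset.prod_X_sub_C_coeff s (k := 5) (by rw [hcard]; norm_num)
    rw [hcard] at this
    simp only [show 6 - 5 = 1 from rfl, Multiset.esymm_one', hsum, mul_zero] at this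
    exact this
  have heval : ∀ x : ℝ, g.eval x = (s.map fun r => x - r).prod := by
    intro x
    rw [hg, Polynomial.eval_multiset_prod, Multiset.map_map]
    simp
  have hroot : ∀ p : P, g.eval (t p) = 0 ↔ p ∈ S := by
    intro p
    rw [heval]
    rw [Multiset.prod_eq_zero_iff, Multiset.mem_map]
    constructor
    · rintro ⟨r, hr, hx0⟩
      have htp : t p = r := by linarith [sub_eq_zero.mp hx0]
      rw [hs] at hr
      simp only [Multiset.mem_add, Multiset.mem_replicate, Multiset.mem_singleton,
        Multiset.mem_map] at hr
      rcases hr with (⟨-, rfl⟩ | rfl) | ⟨q, hq, rfl⟩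
      · linarith [ht p]
      · linarith [ht p]
      · rw [htinj htp]; exact Finset.mem_def.mpr hq
    · intro hp
      refine ⟨t p, ?_, sub_self _⟩
      rw [hs]
      simp only [Multiset.mem_add, Multiset.mem_map]
      exact Or.inr ⟨p, hp, rfl⟩
  -- now define the conic
  set Q : MvPolynomial (Fin 2) ℝ :=
      monomial 0 (g.coeff 0) + monomial (Finsupp.single 0 1) (g.coeff 1)
      + monomial (Finsupp.single 0 2) (g.coeff 2) + monomial (Finsupp.single 1 1) (g.coeff 3)
      + monomial (Finsupp.single 0 1 + Finsupp.single 1 1) (g.coeff 4)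
      + monomial (Finsupp.single 1 2) 1 with hQ
  have hQeval : ∀ x : ℝ, eval ![x, x ^ 3] Q = g.eval x := by
    intro x
    rw [Polynomial.eval_eq_sum_range' (lt_of_le_of_lt hdeg (by norm_num : (6:ℕ) < 7))]
    rw [Finset.sum_range_succ, Finset.sum_range_succ, Finset.sum_range_succ,
      Finset.sum_range_succ, Finset.sum_range_succ, Finset.sum_range_succ,
      Finset.sum_range_one, hc5, hc6]
    have hprod : ((Finsupp.single (0 : Fin 2) 1) + Finsupp.single 1 1).prod
        (fun n e => (![x, x ^ 3]) n ^ e) = x * x ^ 3 := by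
      rw [Finsupp.prod_add_index (by intro a _; simp) (by intro a _ b₁ b₂; rw [pow_add])]
      rw [Finsupp.prod_single_index (by simp), Finsupp.prod_single_index (by simp)]
      simp
    simp only [hQ, eval_add, eval_monomial, Finsupp.prod_zero_index, hprod]
    simp [Finsupp.prod_single_index]
    ring
  refine ⟨Q, ?_, fun p => by rw [hQeval, hroot]⟩
  -- total degree
  have h2 : (Finsupp.single (1 : Fin 2) 2).sum (fun _ e => e) = 2 := by
    simp
  apply le_antisymm
  · rw [hQ]
    refine le_trans (totalDegree_add _ _) (max_le (le_trans (totalDegree_add _ _)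
      (max_le (le_trans (totalDegree_add _ _) (max_le (le_trans (totalDegree_add _ _)
      (max_le (le_trans (totalDegree_add _ _) (max_le ?_ ?_)) ?_)) ?_)) ?_)) ?_) <;>
    · refine le_trans (totalDegree_monomial_le _ _) ?_
      simp [Finsupp.sum_add_index]
  · have hco : coeff (Finsupp.single 1 2) Q = 1 := by
      have h0 : (0 : Fin 2 →₀ ℕ) ≠ Finsupp.single 1 2 := by
        intro h; have := DFunLike.congr_fun h 1; simp at this
      have h1 : Finsupp.single (0 : Fin 2) 1 ≠ Finsupp.single 1 2 := by
        intro h; have := DFunLike.congr_fun h 1; simp [Finsupp.single_apply] at this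
      have h2' : Finsupp.single (0 : Fin 2) 2 ≠ Finsupp.single 1 2 := by
        intro h; have := DFunLike.congr_fun h 1; simp [Finsupp.single_apply] at this
      have h3 : Finsupp.single (1 : Fin 2) 1 ≠ Finsupp.single 1 2 := by
        intro h; have := DFunLike.congr_fun h 1; simp [Finsupp.single_apply] at this
      have h4 : Finsupp.single (0 : Fin 2) 1 + Finsupp.single 1 1 ≠ Finsupp.single 1 2 := by
        intro h; have := DFunLike.congr_fun h 0; simp [Finsupp.single_apply] at this
      rw [hQ]
      simp only [coeff_add, coeff_monomial, if_neg h0, if_neg h1, if_neg h2', if_neg h3,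
        if_neg h4, if_pos rfl]
      simp
    have : Finsupp.single (1:Fin 2) 2 ∈ Q.support := by
      rw [mem_support_iff, hco]; norm_num
    have := le_totalDegree this
    rwa [h2] at this

/-- Every finite bipartite graph (P ∪ B, adjacency Adj) in which every vertex of B has
degree at most 5 and which contains no K_{5,2} subgraph admits a realization by points
and conics: distinct points of the real plane are assigned to P and conics (zero sets
of degree-2 polynomials in two variables) to B so that adjacency corresponds exactly
to the point lying on the conic. -/
theorem bipartite_no_K52_point_conic_realizable
    {P B : Type*} [Fintype P] [Fintype B] (Adj : P → B → Prop)
    (hdeg : ∀ b : B, Set.ncard {p : P | Adj p b} ≤ 5)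
    (hK52 : ¬ ∃ (p : Fin 5 → P) (b₁ b₂ : B),
      Function.Injective p ∧ b₁ ≠ b₂ ∧ ∀ i, Adj (p i) b₁ ∧ Adj (p i) b₂) :
    ∃ (f : P → (Fin 2 → ℝ)) (Q : B → MvPolynomial (Fin 2) ℝ),
      Function.Injective f ∧ (∀ b, (Q b).totalDegree = 2) ∧
      ∀ p b, Adj p b ↔ eval (f p) (Q b) = 0 := by
  classical
  set t : P → ℝ := fun p => 11 + ((Fintype.equivFin P p : ℕ) : ℝ) with ht
  have htinj : Function.Injective t := by
    intro p q h
    have h' : ((Fintype.equivFin P p : ℕ) : ℝ) = ((Fintype.equivFin P q : ℕ) : ℝ) := by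
      simp only [ht] at h; linarith
    exact (Fintype.equivFin P).injective (Fin.ext (by exact_mod_cast h'))
  have ht11 : ∀ p, 11 ≤ t p := by
    intro p
    have : (0 : ℝ) ≤ ((Fintype.equivFin P p : ℕ) : ℝ) := Nat.cast_nonneg _
    simp only [ht]; linarith
  set S : B → Finset P := fun b => Finset.univ.filter (fun p => Adj p b) with hSdef
  have hScard : ∀ b, (S b).card ≤ 5 := by
    intro b
    have hset : {p : P | Adj p b} = ↑(S b) := by ext p; simp [hSdef]
    have := hdeg b
    rwa [hset, Set.ncard_coe_finset] at this
  choose Q hQdeg hQmem using fun b => conic_through t htinj ht11 (S b) (hScard b)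
  refine ⟨fun p => ![t p, t p ^ 3], Q, ?_, hQdeg, ?_⟩
  · intro p q h
    exact htinj (by simpa using congrFun h 0)
  · intro p b
    rw [hQmem b p]
    simp [hSdef]
end

section
/- In the real plane, for each n ≥ 1 one can place n points in general position with respect to conics: there exist n distinct points in the plane such that no six of them lie on a common conic. -/
open MvPolynomial

lemma multiset_esymm_one' {R : Type*} [CommSemiring R] (s : Multiset R) :
    s.esymm 1 = s.sum := by
  simp [Multiset.esymm, Multiset.powersetCard_one, Multiset.map_map]

/-- For every n ≥ 1 one can place n distinct points in the real plane in general
position with respect to conics: no six of them lie on a common conic, where a conic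
is the zero set of a nonzero polynomial of degree at most 2 in two variables. -/
theorem points_in_general_position_wrt_conics (n : ℕ) (hn : 1 ≤ n) :
    ∃ pts : Fin n → (Fin 2 → ℝ), Function.Injective pts ∧
      ∀ s : Finset (Fin n), s.card = 6 →
        ¬ ∃ Q : MvPolynomial (Fin 2) ℝ, Q ≠ 0 ∧ Q.totalDegree ≤ 2 ∧
            ∀ i ∈ s, eval (pts i) Q = 0 := by
  classical
  set t : Fin n → ℝ := fun i => (i : ℝ) + 1 with ht
  have htpos : ∀ i, 0 < t i := by
    intro i
    have : (0 : ℝ) ≤ (i : ℕ) := Nat.cast_nonneg _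
    simp only [ht]
    push_cast
    linarith
  have htinj : Function.Injective t := by
    intro a b hab
    simp only [ht] at hab
    have : ((a : ℕ) : ℝ) = ((b : ℕ) : ℝ) := by linarith
    exact Fin.ext (Nat.cast_injective this)
  refine ⟨fun i => ![t i, (t i) ^ 3], ?_, ?_⟩
  · intro a b hab
    exact htinj (congrFun hab 0)
  · rintro s hs ⟨Q, hQ0, hdeg, hvan⟩
    set e : (Fin 2 →₀ ℕ) → ℕ := fun d => d 0 + 3 * d 1 with he
    have hsupp : ∀ d ∈ Q.support, d 0 + d 1 ≤ 2 := by
      intro d hd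
      have h1 : d.sum (fun _ k => k) ≤ Q.totalDegree := MvPolynomial.le_totalDegree hd
      have h2 : d.sum (fun _ k => k) = d 0 + d 1 := by
        rw [Finsupp.sum_fintype _ _ (fun _ => rfl)]
        exact Fin.sum_univ_two _
      omega
    have hemax : ∀ d ∈ Q.support, e d ≤ 6 := by
      intro d hd; have := hsupp d hd; simp only [he]; omega
    -- the univariate restriction
    set P : Polynomial ℝ :=
      ∑ d ∈ Q.support, Polynomial.C (MvPolynomial.coeff d Q) * Polynomial.X ^ (e d) with hP
    have hPcoeff : ∀ k, P.coeff k =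
        ∑ d ∈ Q.support, if k = e d then MvPolynomial.coeff d Q else 0 := by
      intro k
      rw [hP, Polynomial.finset_sum_coeff]
      refine Finset.sum_congr rfl fun d _ => ?_
      rw [Polynomial.coeff_C_mul, Polynomial.coeff_X_pow]
      split <;> simp
    have hPeval : ∀ i, P.eval (t i) = eval (fun j => ![t i, (t i) ^ 3] j) Q := by
      intro i
      rw [MvPolynomial.eval_eq', hP, Polynomial.eval_finset_sum]
      refine Finset.sum_congr rfl fun d _ => ?_
      rw [Polynomial.eval_mul, Polynomial.eval_C, Polynomial.eval_pow, Polynomial.eval_X]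
      congr 1
      rw [Fin.prod_univ_two]
      simp only [Matrix.cons_val_zero, Matrix.cons_val_one, Matrix.head_cons, he]
      rw [pow_add, ← pow_mul]
    have hroots : ∀ i ∈ s, P.eval (t i) = 0 := by
      intro i hi
      rw [hPeval]
      exact hvan i hi
    have hPne : P ≠ 0 := by
      obtain ⟨d, hd⟩ := (MvPolynomial.support_nonempty).2 hQ0
      intro h
      have hco : P.coeff (e d) = MvPolynomial.coeff d Q := by
        rw [hPcoeff]
        rw [Finset.sum_eq_single d]
        · simp
        · intro b hb hbne
          have hb2 := hsupp b hb
          have hd2 := hsupp d hd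
          split
          · exfalso
            apply hbne
            have heq : e d = e b := by omega
            simp only [he] at heq
            have h0 : d 0 = b 0 ∧ d 1 = b 1 := by omega
            ext j
            fin_cases j
            · exact h0.1.symm
            · exact h0.2.symm
          · rfl
        · intro hnd; exact absurd hd hnd
      rw [h, Polynomial.coeff_zero] at hco
      exact (MvPolynomial.mem_support_iff.1 hd) hco.symm
    have hdegle : P.natDegree ≤ 6 := by
      rw [hP]
      refine Polynomial.natDegree_sum_le_of_forall_le _ _ fun d hd => ?_
      exact le_trans (Polynomial.natDegree_C_mul_X_pow_le _ _) (hemax d hd)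
    have h5 : P.coeff 5 = 0 := by
      rw [hPcoeff]
      refine Finset.sum_eq_zero fun d hd => ?_
      have := hsupp d hd
      have : (5 : ℕ) ≠ e d := by simp only [he]; omega
      simp [this]
    set d6 : Fin 2 →₀ ℕ := Finsupp.single 1 2 with hd6
    have hd6v : d6 0 = 0 ∧ d6 1 = 2 := by simp [hd6]
    by_cases hc : MvPolynomial.coeff d6 Q = 0
    · -- low degree case: at most 4 roots
      have hle4 : ∀ d ∈ Q.support, e d ≤ 4 := by
        intro d hd
        have h2 := hsupp d hd
        by_cases h1 : d 1 = 2
        · exfalso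
          have hdd : d = d6 := by
            ext j
            fin_cases j
            · show d 0 = d6 0; omega
            · show d 1 = d6 1; omega
          rw [hdd] at hd
          exact (MvPolynomial.mem_support_iff.1 hd) hc
        · simp only [he]; omega
      have hdeg4 : P.natDegree ≤ 4 := by
        rw [hP]
        refine Polynomial.natDegree_sum_le_of_forall_le _ _ fun d hd => ?_
        exact le_trans (Polynomial.natDegree_C_mul_X_pow_le _ _) (hle4 d hd)
      have hPzero : P = 0 := by
        refine Polynomial.eq_zero_of_natDegree_lt_card_of_eval_eq_zero' P (s.image t) ?_ ?_
        · intro x hx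
          obtain ⟨i, hi, rfl⟩ := Finset.mem_image.1 hx
          exact hroots i hi
        · rw [Finset.card_image_of_injective _ htinj, hs]
          omega
      exact hPne hPzero
    · -- degree exactly 6: Vieta
      have h6 : P.coeff 6 = MvPolynomial.coeff d6 Q := by
        rw [hPcoeff]
        have hd6mem : d6 ∈ Q.support := MvPolynomial.mem_support_iff.2 hc
        rw [Finset.sum_eq_single d6]
        · have : (6 : ℕ) = e d6 := by simp only [he]; omega
          simp [this]
        · intro b hb hbne
          have hb2 := hsupp b hb
          split
          · exfalso
            apply hbne
            have : b 0 = 0 ∧ b 1 = 2 := by simp only [he] at *; omega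
            ext j
            fin_cases j
            · show b 0 = d6 0; omega
            · show b 1 = d6 1; omega
          · rfl
        · intro hnd; exact absurd hd6mem hnd
      have hnd : P.natDegree = 6 :=
        le_antisymm hdegle (Polynomial.le_natDegree_of_ne_zero (h6 ▸ hc))
      set m : Multiset ℝ := (s.image t).val with hm
      have hmnodup : m.Nodup := (s.image t).nodup
      have hmle : m ≤ P.roots := by
        rw [Multiset.le_iff_subset hmnodup]
        intro x hx
        obtain ⟨i, hi, rfl⟩ := Finset.mem_image.1 hx
        rw [Polynomial.mem_roots hPne]
        exact hroots i hi
      have hcardm : Multiset.card m = 6 := by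
        rw [hm, Finset.card_val, Finset.card_image_of_injective _ htinj, hs]
      have hroots_card : Multiset.card P.roots = 6 := by
        refine le_antisymm ?_ ?_
        · rw [← hnd]; exact Polynomial.card_roots' P
        · rw [← hcardm]; exact Multiset.card_le_card hmle
      have hm_eq : m = P.roots :=
        Multiset.eq_of_le_of_card_le hmle (by rw [hroots_card, hcardm])
      have hvieta := Polynomial.coeff_eq_esymm_roots_of_card
        (p := P) (hroots_card.trans hnd.symm) (k := 5) (by omega)
      rw [hnd] at hvieta
      have hsum : P.roots.sum = ∑ i ∈ s, t i := by
        rw [← hm_eq, hm]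
        have h1 : (Finset.image t s).val.sum = ∑ x ∈ Finset.image t s, x := by
          simp [Finset.sum]
        rw [h1, Finset.sum_image (fun a _ b _ hab => htinj hab)]
      have hsumpos : (0:ℝ) < P.roots.sum := by
        rw [hsum]
        refine Finset.sum_pos (fun i _ => htpos i) ?_
        rw [← Finset.card_pos, hs]; omega
      have hlead : P.leadingCoeff ≠ 0 := Polynomial.leadingCoeff_ne_zero.2 hPne
      have : (6 : ℕ) - 5 = 1 := rfl
      rw [this, multiset_esymm_one'] at hvieta
      rw [h5, pow_one, mul_neg_one, neg_mul, eq_comm, neg_eq_zero] at hvieta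
      rcases mul_eq_zero.mp hvieta with h | h
      · exact hlead h
      · exact (ne_of_gt hsumpos) h
end

section
/- Let P = ABCD be a parallelogram with centre O, and choose one point on each of its four sides, none coinciding with a vertex, such that the four chosen points are symmetric in pairs with respect to O (the point on side AB is the reflection through O of the point on side CD, and similarly for BC and DA). Then there exists an ellipse passing through these four points and through the vertices A and C, and there also exists an ellipse passing through these four points and through the vertices B and D. -/
def IsEllipse (E : Set (Fin 2 → ℝ)) : Prop :=
  ∃ φ : (Fin 2 → ℝ) ≃ᵃ[ℝ] (Fin 2 → ℝ),
    E = φ '' {x : Fin 2 → ℝ | (x 0) ^ 2 + (x 1) ^ 2 = 1}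

noncomputable def linEquiv2 (p q r s : ℝ) (h : p * s - q * r ≠ 0) :
    (Fin 2 → ℝ) ≃ₗ[ℝ] (Fin 2 → ℝ) where
  toFun x := ![p * x 0 + q * x 1, r * x 0 + s * x 1]
  invFun y := ![(s * y 0 - q * y 1) / (p * s - q * r),
                (-r * y 0 + p * y 1) / (p * s - q * r)]
  map_add' x y := by funext i; fin_cases i <;> simp <;> ring
  map_smul' c x := by funext i; fin_cases i <;> simp <;> ring
  left_inv x := by funext i; fin_cases i <;> (simp; field_simp; rw [div_eq_iff (fun h' => h (by linear_combination h'))]; ring)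
  right_inv y := by funext i; fin_cases i; (simp; field_simp; ring); (simp; field_simp; rw [div_eq_iff (fun h' => h (by linear_combination h'))]; ring)

@[simp] lemma linEquiv2_apply (p q r s : ℝ) (h) (x : Fin 2 → ℝ) :
    linEquiv2 p q r s h x = ![p * x 0 + q * x 1, r * x 0 + s * x 1] := rfl

lemma IsEllipse.image {E : Set (Fin 2 → ℝ)} (h : IsEllipse E)
    (ψ : (Fin 2 → ℝ) ≃ᵃ[ℝ] (Fin 2 → ℝ)) : IsEllipse (ψ '' E) := by
  obtain ⟨φ, rfl⟩ := h
  exact ⟨φ.trans ψ, by rw [AffineEquiv.coe_trans, Set.image_comp]⟩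

lemma isEllipse_quadric {a b c : ℝ} (ha : 0 < a) (hd : 0 < 4 * a * c - b ^ 2) :
    IsEllipse {x : Fin 2 → ℝ | a * x 0 ^ 2 + b * (x 0 * x 1) + c * x 1 ^ 2 = 1} := by
  set α := Real.sqrt a with hαdef
  set δ := Real.sqrt ((4 * a * c - b ^ 2) / (4 * a)) with hδdef
  have hα : 0 < α := Real.sqrt_pos.2 ha
  have hδ : 0 < δ := Real.sqrt_pos.2 (by positivity)
  have hα2 : α ^ 2 = a := Real.sq_sqrt ha.le
  have hδ2 : δ ^ 2 = (4 * a * c - b ^ 2) / (4 * a) := Real.sq_sqrt (by positivity)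
  have hδ2' : 4 * a * δ ^ 2 = 4 * a * c - b ^ 2 := by
    rw [hδ2]; field_simp
  have hdet : α * δ - (b / (2 * α)) * 0 ≠ 0 := by
    simp only [mul_zero, sub_zero]; exact (mul_pos hα hδ).ne'
  set M := linEquiv2 α (b / (2 * α)) 0 δ hdet with hM
  refine ⟨M.symm.toAffineEquiv, ?_⟩
  have key : ∀ x : Fin 2 → ℝ,
      (M x 0) ^ 2 + (M x 1) ^ 2 = a * x 0 ^ 2 + b * (x 0 * x 1) + c * x 1 ^ 2 := by
    intro x
    simp only [hM, linEquiv2_apply, Matrix.cons_val_zero, Matrix.cons_val_one,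
      Matrix.head_cons, zero_mul, zero_add]
    field_simp
    linear_combination (4 * α ^ 2 * x 0 ^ 2 + 4 * δ ^ 2 * x 1 ^ 2 - 4 * c * x 1 ^ 2) * hα2
      + x 1 ^ 2 * hδ2'
  ext x
  simp only [Set.mem_setOf_eq, Set.mem_image]
  constructor
  · intro hx
    exact ⟨M x, (key x).trans hx, by simp⟩
  · rintro ⟨y, hy, rfl⟩
    have hMy : M (M.symm.toAffineEquiv y) = y := by simp
    calc a * (M.symm.toAffineEquiv y 0) ^ 2
          + b * (M.symm.toAffineEquiv y 0 * M.symm.toAffineEquiv y 1)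
          + c * (M.symm.toAffineEquiv y 1) ^ 2
        = (M (M.symm.toAffineEquiv y) 0) ^ 2 + (M (M.symm.toAffineEquiv y) 1) ^ 2 :=
          (key _).symm
      _ = y 0 ^ 2 + y 1 ^ 2 := by rw [hMy]
      _ = 1 := hy

lemma collinear_of_det_eq_zero (A B C : Fin 2 → ℝ)
    (h : (B 0 - A 0) * (C 1 - A 1) - (B 1 - A 1) * (C 0 - A 0) = 0) :
    Collinear ℝ ({A, B, C} : Set (Fin 2 → ℝ)) := by
  rw [collinear_iff_exists_forall_eq_smul_vadd]
  by_cases hBA : B = A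
  · refine ⟨A, C - A, ?_⟩
    rintro p (rfl | rfl | rfl)
    · exact ⟨0, by simp⟩
    · exact ⟨0, by simp [hBA]⟩
    · exact ⟨1, by simp⟩
  · refine ⟨A, B - A, ?_⟩
    rintro p (rfl | rfl | rfl)
    · exact ⟨0, by simp⟩
    · exact ⟨1, by simp⟩
    · have hne : B 0 - A 0 ≠ 0 ∨ B 1 - A 1 ≠ 0 := by
        by_contra hcon
        push_neg at hcon
        exact hBA (funext fun i => by
          fin_cases i
          · exact sub_eq_zero.mp hcon.1
          · exact sub_eq_zero.mp hcon.2)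
      rcases hne with h0 | h1
      · refine ⟨(p 0 - A 0) / (B 0 - A 0), ?_⟩
        funext i
        fin_cases i
        · show p 0 = _ * (B - A) 0 + A 0
          simp only [Pi.sub_apply]; field_simp; ring
        · show p 1 = _ * (B - A) 1 + A 1
          simp only [Pi.sub_apply]; field_simp; linear_combination h
      · refine ⟨(p 1 - A 1) / (B 1 - A 1), ?_⟩
        funext i
        fin_cases i
        · show p 0 = _ * (B - A) 0 + A 0
          simp only [Pi.sub_apply]; field_simp; linear_combination -h
        · show p 1 = _ * (B - A) 1 + A 1
          simp only [Pi.sub_apply]; field_simp; ring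

lemma funext2 {w z : Fin 2 → ℝ} (h0 : w 0 = z 0) (h1 : w 1 = z 1) : w = z := by
  funext i; fin_cases i
  · exact h0
  · exact h1

lemma exists_conic1 (s t : ℝ) (hs1 : -1 < s) (hs2 : s < 1) (ht1 : -1 < t) (ht2 : t < 1) :
    ∃ S : Set (Fin 2 → ℝ), IsEllipse S ∧ ![s, -1] ∈ S ∧ ![1, t] ∈ S ∧ ![-s, 1] ∈ S ∧
      ![-1, -t] ∈ S ∧ ![-1, -1] ∈ S ∧ ![1, 1] ∈ S := by
  have h1st : 0 < 1 + s * t := by nlinarith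
  have h1s : 0 < 1 - s := by linarith
  have h1t' : 0 < 1 + t := by linarith
  set a : ℝ := (1 + t) / (1 + s * t) with ha
  set b : ℝ := -((1 - s) * (1 + t)) / (1 + s * t) with hb
  set c : ℝ := (1 - s) / (1 + s * t) with hc
  have hapos : 0 < a := div_pos h1t' h1st
  have hdpos : 0 < 4 * a * c - b ^ 2 := by
    have key : 4 * a * c - b ^ 2
        = ((1 - s) * (1 + t) * (4 - (1 - s) * (1 + t))) / (1 + s * t) ^ 2 := by
      rw [ha, hb, hc]; field_simp
    rw [key]
    have h4 : (1 - s) * (1 + t) < 4 := by nlinarith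
    have h6 : 0 < 4 - (1 - s) * (1 + t) := by linarith
    have h5 : 0 < (1 - s) * (1 + t) := mul_pos h1s h1t'
    positivity
  refine ⟨_, isEllipse_quadric hapos hdpos, ?_, ?_, ?_, ?_, ?_, ?_⟩
  · show a * (![s, -1] 0) ^ 2 + b * ((![s, -1] 0) * (![s, -1] 1)) + c * (![s, -1] 1) ^ 2 = 1
    simp only [Matrix.cons_val_zero, Matrix.cons_val_one, Matrix.head_cons]
    rw [ha, hb, hc]; field_simp; rw [div_eq_one_iff_eq (by nlinarith)]; ring
  · show a * (![1, t] 0) ^ 2 + b * ((![1, t] 0) * (![1, t] 1)) + c * (![1, t] 1) ^ 2 = 1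
    simp only [Matrix.cons_val_zero, Matrix.cons_val_one, Matrix.head_cons]
    rw [ha, hb, hc]; field_simp; rw [div_eq_one_iff_eq (by nlinarith)]; ring
  · show a * (![-s, 1] 0) ^ 2 + b * ((![-s, 1] 0) * (![-s, 1] 1)) + c * (![-s, 1] 1) ^ 2 = 1
    simp only [Matrix.cons_val_zero, Matrix.cons_val_one, Matrix.head_cons]
    rw [ha, hb, hc]; field_simp; rw [div_eq_one_iff_eq (by nlinarith)]; ring
  · show a * (![-1, -t] 0) ^ 2 + b * ((![-1, -t] 0) * (![-1, -t] 1)) + c * (![-1, -t] 1) ^ 2 = 1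
    simp only [Matrix.cons_val_zero, Matrix.cons_val_one, Matrix.head_cons]
    rw [ha, hb, hc]; field_simp; rw [div_eq_one_iff_eq (by nlinarith)]; ring
  · show a * (![-1, -1] 0) ^ 2 + b * ((![-1, -1] 0) * (![-1, -1] 1)) + c * (![-1, -1] 1) ^ 2 = 1
    simp only [Matrix.cons_val_zero, Matrix.cons_val_one, Matrix.head_cons]
    rw [ha, hb, hc]; field_simp; rw [div_eq_one_iff_eq (by nlinarith)]; ring
  · show a * (![1, 1] 0) ^ 2 + b * ((![1, 1] 0) * (![1, 1] 1)) + c * (![1, 1] 1) ^ 2 = 1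
    simp only [Matrix.cons_val_zero, Matrix.cons_val_one, Matrix.head_cons]
    rw [ha, hb, hc]; field_simp; rw [div_eq_one_iff_eq (by nlinarith)]; ring

lemma exists_conic2 (s t : ℝ) (hs1 : -1 < s) (hs2 : s < 1) (ht1 : -1 < t) (ht2 : t < 1) :
    ∃ S : Set (Fin 2 → ℝ), IsEllipse S ∧ ![s, -1] ∈ S ∧ ![1, t] ∈ S ∧ ![-s, 1] ∈ S ∧
      ![-1, -t] ∈ S ∧ ![1, -1] ∈ S ∧ ![-1, 1] ∈ S := by
  have h1st : 0 < 1 + s * t := by nlinarith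
  have h1s' : 0 < 1 + s := by linarith
  have h1t : 0 < 1 - t := by linarith
  set a : ℝ := (1 - t) / (1 + s * t) with ha
  set b : ℝ := ((1 + s) * (1 - t)) / (1 + s * t) with hb
  set c : ℝ := (1 + s) / (1 + s * t) with hc
  have hapos : 0 < a := div_pos h1t h1st
  have hdpos : 0 < 4 * a * c - b ^ 2 := by
    have key : 4 * a * c - b ^ 2
        = ((1 + s) * (1 - t) * (4 - (1 + s) * (1 - t))) / (1 + s * t) ^ 2 := by
      rw [ha, hb, hc]; field_simp
    rw [key]
    have h4 : (1 + s) * (1 - t) < 4 := by nlinarith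
    have h6 : 0 < 4 - (1 + s) * (1 - t) := by linarith
    have h5 : 0 < (1 + s) * (1 - t) := mul_pos h1s' h1t
    positivity
  refine ⟨_, isEllipse_quadric hapos hdpos, ?_, ?_, ?_, ?_, ?_, ?_⟩
  · show a * (![s, -1] 0) ^ 2 + b * ((![s, -1] 0) * (![s, -1] 1)) + c * (![s, -1] 1) ^ 2 = 1
    simp only [Matrix.cons_val_zero, Matrix.cons_val_one, Matrix.head_cons]
    rw [ha, hb, hc]; field_simp; rw [div_eq_one_iff_eq (by nlinarith)]; ring
  · show a * (![1, t] 0) ^ 2 + b * ((![1, t] 0) * (![1, t] 1)) + c * (![1, t] 1) ^ 2 = 1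
    simp only [Matrix.cons_val_zero, Matrix.cons_val_one, Matrix.head_cons]
    rw [ha, hb, hc]; field_simp; rw [div_eq_one_iff_eq (by nlinarith)]; ring
  · show a * (![-s, 1] 0) ^ 2 + b * ((![-s, 1] 0) * (![-s, 1] 1)) + c * (![-s, 1] 1) ^ 2 = 1
    simp only [Matrix.cons_val_zero, Matrix.cons_val_one, Matrix.head_cons]
    rw [ha, hb, hc]; field_simp; rw [div_eq_one_iff_eq (by nlinarith)]; ring
  · show a * (![-1, -t] 0) ^ 2 + b * ((![-1, -t] 0) * (![-1, -t] 1)) + c * (![-1, -t] 1) ^ 2 = 1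
    simp only [Matrix.cons_val_zero, Matrix.cons_val_one, Matrix.head_cons]
    rw [ha, hb, hc]; field_simp; rw [div_eq_one_iff_eq (by nlinarith)]; ring
  · show a * (![1, -1] 0) ^ 2 + b * ((![1, -1] 0) * (![1, -1] 1)) + c * (![1, -1] 1) ^ 2 = 1
    simp only [Matrix.cons_val_zero, Matrix.cons_val_one, Matrix.head_cons]
    rw [ha, hb, hc]; field_simp; rw [div_eq_one_iff_eq (by nlinarith)]; ring
  · show a * (![-1, 1] 0) ^ 2 + b * ((![-1, 1] 0) * (![-1, 1] 1)) + c * (![-1, 1] 1) ^ 2 = 1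
    simp only [Matrix.cons_val_zero, Matrix.cons_val_one, Matrix.head_cons]
    rw [ha, hb, hc]; field_simp; rw [div_eq_one_iff_eq (by nlinarith)]; ring

/-- Let ABCD be a (nondegenerate) parallelogram with centre O and choose a point on
each of its four sides, none coinciding with a vertex, such that the chosen points are
symmetric in pairs with respect to O.  Then there is an ellipse through the four chosen
points and the vertices A and C, and there is an ellipse through the four chosen points
and the vertices B and D. -/
theorem parallelogram_two_ellipses
    (A B C D P₁ P₂ P₃ P₄ : Fin 2 → ℝ)
    (hpar : B - A = C - D)
    (hnd : ¬ Collinear ℝ ({A, B, C} : Set (Fin 2 → ℝ)))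
    (h₁ : P₁ ∈ segment ℝ A B) (h₁A : P₁ ≠ A) (h₁B : P₁ ≠ B)
    (h₂ : P₂ ∈ segment ℝ B C) (h₂B : P₂ ≠ B) (h₂C : P₂ ≠ C)
    (h₃ : P₃ ∈ segment ℝ C D) (h₃C : P₃ ≠ C) (h₃D : P₃ ≠ D)
    (h₄ : P₄ ∈ segment ℝ D A) (h₄D : P₄ ≠ D) (h₄A : P₄ ≠ A)
    (hsym₁ : P₃ = A + C - P₁)
    (hsym₂ : P₄ = A + C - P₂) :
    (∃ E : Set (Fin 2 → ℝ), IsEllipse E ∧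
        ({P₁, P₂, P₃, P₄, A, C} : Set (Fin 2 → ℝ)) ⊆ E) ∧
    (∃ E : Set (Fin 2 → ℝ), IsEllipse E ∧
        ({P₁, P₂, P₃, P₄, B, D} : Set (Fin 2 → ℝ)) ⊆ E) := by
  -- extract segment parameters
  rw [segment_eq_image'] at h₁ h₂
  obtain ⟨r₁, hr₁, hP1⟩ := h₁
  obtain ⟨r₂, hr₂, hP2⟩ := h₂
  have hr₁0 : r₁ ≠ 0 := by
    rintro rfl; exact h₁A (by rw [← hP1]; simp)
  have hr₁1 : r₁ ≠ 1 := by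
    rintro rfl; apply h₁B; rw [← hP1]; show A + (1:ℝ) • (B - A) = B; rw [one_smul]; abel
  have hr₂0 : r₂ ≠ 0 := by
    rintro rfl; exact h₂B (by rw [← hP2]; simp)
  have hr₂1 : r₂ ≠ 1 := by
    rintro rfl; apply h₂C; rw [← hP2]; show B + (1:ℝ) • (C - B) = C; rw [one_smul]; abel
  have hr₁' : 0 < r₁ ∧ r₁ < 1 := ⟨hr₁.1.lt_of_ne (Ne.symm hr₁0), hr₁.2.lt_of_ne hr₁1⟩
  have hr₂' : 0 < r₂ ∧ r₂ < 1 := ⟨hr₂.1.lt_of_ne (Ne.symm hr₂0), hr₂.2.lt_of_ne hr₂1⟩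
  set s : ℝ := 2 * r₁ - 1 with hs
  set t : ℝ := 2 * r₂ - 1 with ht
  have hs1 : -1 < s := by simp [hs]; linarith [hr₁'.1]
  have hs2 : s < 1 := by simp [hs]; linarith [hr₁'.2]
  have ht1 : -1 < t := by simp [ht]; linarith [hr₂'.1]
  have ht2 : t < 1 := by simp [ht]; linarith [hr₂'.2]
  have h1st : 0 < 1 + s * t := by nlinarith
  -- componentwise descriptions
  have hP1c : ∀ i, P₁ i = A i + r₁ * (B i - A i) := fun i => by
    rw [← hP1]; simp
  have hP2c : ∀ i, P₂ i = B i + r₂ * (C i - B i) := fun i => by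
    rw [← hP2]; simp
  have hP3c : ∀ i, P₃ i = A i + C i - P₁ i := fun i => by rw [hsym₁]; simp
  have hP4c : ∀ i, P₄ i = A i + C i - P₂ i := fun i => by rw [hsym₂]; simp
  have hDc : ∀ i, D i = A i + C i - B i := fun i => by
    have := congrFun hpar i
    simp at this
    linarith
  -- the parallelogram affine equivalence
  set p : ℝ := (B 0 - A 0) / 2 with hp
  set q : ℝ := (C 0 - B 0) / 2 with hq
  set u : ℝ := (B 1 - A 1) / 2 with hu
  set v : ℝ := (C 1 - B 1) / 2 with hv
  have hdet : p * v - q * u ≠ 0 := by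
    intro h0
    apply hnd
    apply collinear_of_det_eq_zero
    rw [hp, hq, hu, hv] at h0
    linear_combination 4 * h0
  set O : Fin 2 → ℝ := fun i => (A i + C i) / 2 with hO
  set ψ : (Fin 2 → ℝ) ≃ᵃ[ℝ] (Fin 2 → ℝ) :=
    (linEquiv2 p q u v hdet).toAffineEquiv.trans
      (AffineEquiv.constVAdd ℝ (Fin 2 → ℝ) O) with hψdef
  have hψ0 : ∀ x : Fin 2 → ℝ, ψ x 0 = (A 0 + C 0) / 2 + (p * x 0 + q * x 1) := by
    intro x
    simp [hψdef, AffineEquiv.trans_apply, AffineEquiv.constVAdd_apply, hO]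
  have hψ1 : ∀ x : Fin 2 → ℝ, ψ x 1 = (A 1 + C 1) / 2 + (u * x 0 + v * x 1) := by
    intro x
    simp [hψdef, AffineEquiv.trans_apply, AffineEquiv.constVAdd_apply, hO]
  -- square coordinates of all eight points
  have hA : ψ ![-1, -1] = A := by
    apply funext2 <;> simp [hψ0, hψ1, hp, hq, hu, hv] <;> ring
  have hB : ψ ![1, -1] = B := by
    apply funext2 <;> simp [hψ0, hψ1, hp, hq, hu, hv] <;> ring
  have hC : ψ ![1, 1] = C := by
    apply funext2 <;> simp [hψ0, hψ1, hp, hq, hu, hv] <;> ring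
  have hD : ψ ![-1, 1] = D := by
    apply funext2 <;> (simp [hψ0, hψ1, hp, hq, hu, hv, hDc]; ring)
  have hE1 : ψ ![s, -1] = P₁ := by
    apply funext2 <;> (simp [hψ0, hψ1, hp, hq, hu, hv, hP1c, hs]; ring)
  have hE2 : ψ ![1, t] = P₂ := by
    apply funext2 <;> (simp [hψ0, hψ1, hp, hq, hu, hv, hP2c, ht]; ring)
  have hE3 : ψ ![-s, 1] = P₃ := by
    apply funext2 <;> (simp [hψ0, hψ1, hp, hq, hu, hv, hP3c, hP1c, hs]; ring)
  have hE4 : ψ ![-1, -t] = P₄ := by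
    apply funext2 <;> (simp [hψ0, hψ1, hp, hq, hu, hv, hP4c, hP2c, ht]; ring)
  obtain ⟨S₁, hS₁, q1, q2, q3, q4, q5, q6⟩ := exists_conic1 s t hs1 hs2 ht1 ht2
  obtain ⟨S₂, hT₁, w1, w2, w3, w4, w5, w6⟩ := exists_conic2 s t hs1 hs2 ht1 ht2
  constructor
  · refine ⟨ψ '' S₁, hS₁.image ψ, ?_⟩
    intro x hx
    simp only [Set.mem_insert_iff, Set.mem_singleton_iff] at hx
    rcases hx with rfl | rfl | rfl | rfl | rfl | rfl
    · exact ⟨_, q1, hE1⟩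
    · exact ⟨_, q2, hE2⟩
    · exact ⟨_, q3, hE3⟩
    · exact ⟨_, q4, hE4⟩
    · exact ⟨_, q5, hA⟩
    · exact ⟨_, q6, hC⟩
  · refine ⟨ψ '' S₂, hT₁.image ψ, ?_⟩
    intro x hx
    simp only [Set.mem_insert_iff, Set.mem_singleton_iff] at hx
    rcases hx with rfl | rfl | rfl | rfl | rfl | rfl
    · exact ⟨_, w1, hE1⟩
    · exact ⟨_, w2, hE2⟩
    · exact ⟨_, w3, hE3⟩
    · exact ⟨_, w4, hE4⟩
    · exact ⟨_, w5, hB⟩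
    · exact ⟨_, w6, hD⟩
end

section
/- The incidence structure whose points are the 16 vertices and 32 edge-midpoints of the 4-cube Q4 (48 points total) and whose blocks are the 24 squares each counted twice via the two inscribed conic-quadruple extensions (48 blocks total, each block incident with 4 edge-midpoints and 2 opposite vertices of its square) is a balanced combinatorial configuration of type (48_6): each point is incident with exactly 6 blocks and each block with exactly 6 points. -/
/-- Vertices of the 4-cube `Q₄`. -/
abbrev Q4Vertex : Type := Fin 4 → Fin 2

/-- A finset of vertices of `Q₄` is an edge if it consists of two vertices differing
in exactly one coordinate. -/
def IsQ4Edge (e : Finset Q4Vertex) : Prop :=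
  ∃ u v : Q4Vertex, u ≠ v ∧ e = {u, v} ∧
    (Finset.univ.filter fun i : Fin 4 => u i ≠ v i).card = 1

/-- A finset of vertices of `Q₄` is a square 2-face if it is obtained by fixing two
coordinates and letting the other two vary. -/
def IsQ4Square (f : Finset Q4Vertex) : Prop :=
  ∃ s : Finset (Fin 4), s.card = 2 ∧ ∃ g : Q4Vertex,
    f = Finset.univ.filter fun v : Q4Vertex => ∀ i ∉ s, v i = g i

/-- `d` is a pair of opposite vertices of the square `f`: two vertices of `f`
differing in exactly two coordinates. -/
def IsQ4OppPair (f d : Finset Q4Vertex) : Prop :=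
  ∃ u v : Q4Vertex, u ≠ v ∧ u ∈ f ∧ v ∈ f ∧ d = {u, v} ∧
    (Finset.univ.filter fun i : Fin 4 => u i ≠ v i).card = 2

/-- Points of the configuration: the 16 vertices of `Q₄` together with its 32 edges
(standing for the edge-midpoints). -/
abbrev Q4Point : Type := Q4Vertex ⊕ {e : Finset Q4Vertex // IsQ4Edge e}

/-- Blocks of the configuration: a square 2-face together with a chosen pair of its
opposite vertices (each square gives two blocks). -/
abbrev Q4Block : Type :=
  {fd : Finset Q4Vertex × Finset Q4Vertex // IsQ4Square fd.1 ∧ IsQ4OppPair fd.1 fd.2}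

/-- A vertex is incident with a block iff it belongs to the chosen pair of opposite
vertices; an edge-midpoint is incident with a block iff its edge lies in the square. -/
def Q4Incid : Q4Point → Q4Block → Prop
  | Sum.inl v, b => v ∈ b.1.2
  | Sum.inr e, b => e.1 ⊆ b.1.1

namespace Q4Aux

def mask (s : Finset (Fin 4)) (u : Q4Vertex) : Q4Vertex :=
  fun i => if i ∈ s then u i + 1 else u i

def diffs (u v : Q4Vertex) : Finset (Fin 4) :=
  Finset.univ.filter fun i : Fin 4 => u i ≠ v i

def sq (s : Finset (Fin 4)) (g : Q4Vertex) : Finset Q4Vertex :=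
  Finset.univ.filter fun v : Q4Vertex => ∀ i ∉ s, v i = g i

lemma fin2_ne_add_one (a : Fin 2) : a ≠ a + 1 := by revert a; decide

lemma fin2_eq_add_one {a b : Fin 2} (h : a ≠ b) : b = a + 1 := by revert a b; decide

lemma mem_sq {s : Finset (Fin 4)} {g v : Q4Vertex} : v ∈ sq s g ↔ ∀ i ∉ s, v i = g i := by
  simp [sq]

lemma self_mem_sq {s : Finset (Fin 4)} {g : Q4Vertex} : g ∈ sq s g :=
  mem_sq.2 fun _ _ => rfl

lemma mask_mem_sq {s t : Finset (Fin 4)} {g : Q4Vertex} (h : t ⊆ s) : mask t g ∈ sq s g :=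
  mem_sq.2 fun i hi => by
    have hit : i ∉ t := fun hit => hi (h hit)
    simp [mask, hit]

lemma diffs_mask (s : Finset (Fin 4)) (u : Q4Vertex) : diffs u (mask s u) = s := by
  ext i
  by_cases h : i ∈ s <;> simp [diffs, mask, h, fin2_ne_add_one]

lemma eq_mask_diffs (u v : Q4Vertex) : v = mask (diffs u v) u := by
  funext i
  by_cases h : u i = v i <;> simp [mask, diffs, h]
  · exact fin2_eq_add_one h

lemma mask_mask (s : Finset (Fin 4)) (u : Q4Vertex) : mask s (mask s u) = u := by
  funext i
  have h2 : ∀ a : Fin 2, a + 1 + 1 = a := by decide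
  by_cases h : i ∈ s <;> simp [mask, h, h2]

lemma mask_ne {s : Finset (Fin 4)} (hs : s.Nonempty) (u : Q4Vertex) : mask s u ≠ u := by
  obtain ⟨i, hi⟩ := hs
  intro h
  have h2 := congrFun h i
  simp only [mask, if_pos hi] at h2
  exact fin2_ne_add_one (u i) h2.symm

lemma diffs_comm (u v : Q4Vertex) : diffs u v = diffs v u := by
  ext i; simp [diffs, ne_comm]

lemma sq_congr {s : Finset (Fin 4)} {g u : Q4Vertex} (hu : u ∈ sq s g) : sq s g = sq s u := by
  ext v
  have hu' := mem_sq.1 hu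
  simp only [mem_sq]
  exact ⟨fun h i hi => (h i hi).trans (hu' i hi).symm, fun h i hi => (h i hi).trans (hu' i hi)⟩

lemma mem_of_sq_eq {s s' : Finset (Fin 4)} {g g' : Q4Vertex} (h : sq s g = sq s' g') :
    s ⊆ s' := by
  intro i hi
  by_contra hi'
  have h1 : g ∈ sq s' g' := h ▸ self_mem_sq
  have h2 : mask {i} g ∈ sq s' g' := h ▸ mask_mem_sq (Finset.singleton_subset_iff.2 hi)
  have e1 := mem_sq.1 h1 i hi'
  have e2 := mem_sq.1 h2 i hi'
  simp [mask] at e2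
  rw [e1] at e2
  exact fin2_ne_add_one (g' i) e2.symm

lemma sq_inj_left {s s' : Finset (Fin 4)} {g g' : Q4Vertex} (h : sq s g = sq s' g') :
    s = s' :=
  Finset.Subset.antisymm (mem_of_sq_eq h) (mem_of_sq_eq h.symm)

lemma diffs_subset {s : Finset (Fin 4)} {g u v : Q4Vertex} (hu : u ∈ sq s g) (hv : v ∈ sq s g) :
    diffs u v ⊆ s := by
  intro i hi
  simp only [diffs, Finset.mem_filter] at hi
  by_contra hi'
  exact hi.2 ((mem_sq.1 hu i hi').trans (mem_sq.1 hv i hi').symm)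

end Q4Aux

namespace Q4Aux

abbrev E' := {q : Q4Vertex × Fin 4 // q.1 q.2 = 0}

def eps (q : E') : {e : Finset Q4Vertex // IsQ4Edge e} :=
  ⟨{q.1.1, mask {q.1.2} q.1.1}, by
    refine ⟨q.1.1, mask {q.1.2} q.1.1, (mask_ne (Finset.singleton_nonempty _) _).symm, rfl, ?_⟩
    show (diffs q.1.1 (mask {q.1.2} q.1.1)).card = 1
    rw [diffs_mask]
    exact Finset.card_singleton _⟩

lemma eps_inj_aux {u u' : Q4Vertex} {i i' : Fin 4} (h0 : u i = 0) (h0' : u' i' = 0)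
    (hpair : ({u, mask {i} u} : Finset Q4Vertex) = {u', mask {i'} u'}) : u = u' ∧ i = i' := by
  have hu' : u' = u ∨ u' = mask {i} u := by
    have : u' ∈ ({u, mask {i} u} : Finset Q4Vertex) := by rw [hpair]; simp
    simpa using this
  rcases hu' with h1 | h1
  · refine ⟨h1.symm, ?_⟩
    have hm : mask {i'} u' ∈ ({u, mask {i} u} : Finset Q4Vertex) := by rw [hpair]; simp
    rcases Finset.mem_insert.1 hm with h2 | h2
    · exfalso; rw [h1] at h2; exact mask_ne (Finset.singleton_nonempty _) _ h2
    · rw [Finset.mem_singleton] at h2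
      have key : ({i'} : Finset (Fin 4)) = {i} := by
        rw [← diffs_mask {i'} u', h2, h1, diffs_mask]
      exact (Finset.singleton_inj.1 key).symm
  · exfalso
    have hm : mask {i'} u' ∈ ({u, mask {i} u} : Finset Q4Vertex) := by rw [hpair]; simp
    have hmu : mask {i'} u' = u := by
      rcases Finset.mem_insert.1 hm with h2 | h2
      · exact h2
      · exfalso
        rw [Finset.mem_singleton, ← h1] at h2
        exact mask_ne (Finset.singleton_nonempty _) _ h2
    have hii : i' = i := by
      have e1 : ({i'} : Finset (Fin 4)) = diffs u' u := by rw [← hmu, diffs_mask]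
      have e2 : diffs u u' = {i} := by rw [h1, diffs_mask]
      exact Finset.singleton_inj.1 (e1.trans ((diffs_comm u' u).trans e2))
    rw [hii] at h0'
    have hv : u' i = u i + 1 := by rw [h1]; simp [mask]
    rw [h0', h0] at hv
    exact absurd hv (by decide)

lemma eps_bijective : Function.Bijective eps := by
  constructor
  · rintro ⟨⟨u, i⟩, h0⟩ ⟨⟨u', i'⟩, h0'⟩ h
    obtain ⟨hu, hi⟩ := eps_inj_aux h0 h0' (congrArg Subtype.val h)
    exact Subtype.ext (Prod.ext hu hi)
  · rintro ⟨e, u, v, hne, rfl, hcard⟩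
    obtain ⟨i, hi⟩ := Finset.card_eq_one.1 hcard
    have hv : v = mask {i} u := by
      conv_lhs => rw [eq_mask_diffs u v]
      rw [show diffs u v = {i} from hi]
    by_cases h0 : u i = 0
    · exact ⟨⟨(u, i), h0⟩, Subtype.ext (show ({u, mask {i} u} : Finset Q4Vertex) = {u, v} by rw [← hv])⟩
    · have hx : ∀ a : Fin 2, a ≠ 0 → a + 1 = 0 := by decide
      have hv0 : v i = 0 := by
        rw [hv]; simp only [mask, Finset.mem_singleton, if_pos rfl]
        exact hx _ h0
      refine ⟨⟨(v, i), hv0⟩, Subtype.ext ?_⟩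
      show ({v, mask {i} v} : Finset Q4Vertex) = {u, v}
      rw [hv, mask_mask, Finset.pair_comm]

end Q4Aux

namespace Q4Aux

abbrev B' := {p : Finset (Fin 4) × Q4Vertex //
  p.1.card = 2 ∧ ∀ i ∈ p.1, (∀ j ∈ p.1, i ≤ j) → p.2 i = 0}

lemma two_nonempty {s : Finset (Fin 4)} (h : s.card = 2) : s.Nonempty :=
  Finset.card_pos.1 (by omega)

def beta (x : B') : Q4Block :=
  ⟨(sq x.1.1 x.1.2, {x.1.2, mask x.1.1 x.1.2}), by
    obtain ⟨⟨s, u⟩, h2, hmin⟩ := x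
    refine ⟨⟨s, h2, u, rfl⟩, u, mask s u, (mask_ne (two_nonempty h2) _).symm,
      self_mem_sq, mask_mem_sq (Finset.Subset.refl _), rfl, ?_⟩
    show (diffs u (mask s u)).card = 2
    rw [diffs_mask]; exact h2⟩

lemma beta_bijective : Function.Bijective beta := by
  constructor
  · rintro ⟨⟨s, u⟩, h2, hmin⟩ ⟨⟨s', u'⟩, h2', hmin'⟩ h
    have h' := congrArg Subtype.val h
    have hsq : sq s u = sq s' u' := congrArg Prod.fst h'
    have hpair : ({u, mask s u} : Finset Q4Vertex) = {u', mask s' u'} :=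
      congrArg Prod.snd h'
    have hss : s = s' := sq_inj_left hsq
    subst hss
    have hu' : u' = u ∨ u' = mask s u := by
      have : u' ∈ ({u, mask s u} : Finset Q4Vertex) := by rw [hpair]; simp
      simpa using this
    rcases hu' with h1 | h1
    · exact Subtype.ext (Prod.ext rfl h1.symm)
    · exfalso
      set i₀ := s.min' (two_nonempty h2) with hi₀
      have hm : i₀ ∈ s := Finset.min'_mem _ _
      have e0 : u i₀ = 0 := hmin _ hm (fun _ hj => Finset.min'_le _ _ hj)
      have e0' : u' i₀ = 0 := hmin' _ hm (fun _ hj => Finset.min'_le _ _ hj)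
      have : u' i₀ = u i₀ + 1 := by rw [h1]; simp [mask, hm]
      rw [e0, e0'] at this
      exact absurd this (by decide)
  · rintro ⟨⟨f, d⟩, ⟨s, hs2, g, hf⟩, u, v, hne, hu, hv, hd, hD2⟩
    have hfs : f = sq s g := hf
    have hd' : d = ({u, v} : Finset Q4Vertex) := hd
    subst hd'
    have hDsub : diffs u v ⊆ s := diffs_subset (hfs ▸ hu) (hfs ▸ hv)
    have hDs : diffs u v = s :=
      Finset.eq_of_subset_of_card_le hDsub (by rw [hs2]; exact le_of_eq hD2.symm) 
    have hvm : v = mask s u := by conv_lhs => rw [eq_mask_diffs u v, hDs]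
    have hfu : f = sq s u := hfs.trans (sq_congr (hfs ▸ hu))
    set i₀ := s.min' (two_nonempty hs2) with hi₀
    have hm : i₀ ∈ s := Finset.min'_mem _ _
    have hminprop : ∀ w : Q4Vertex, w i₀ = 0 → ∀ i ∈ s, (∀ j ∈ s, i ≤ j) → w i = 0 := by
      intro w hw i hi hle
      have : i = i₀ := le_antisymm (hle _ hm) (Finset.min'_le _ _ hi)
      rw [this]; exact hw
    by_cases h0 : u i₀ = 0
    · refine ⟨⟨(s, u), hs2, hminprop u h0⟩, Subtype.ext (Prod.ext hfu.symm ?_)⟩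
      show ({u, mask s u} : Finset Q4Vertex) = {u, v}
      rw [← hvm]
    · have hx : ∀ a : Fin 2, a ≠ 0 → a + 1 = 0 := by decide
      have h0' : (mask s u) i₀ = 0 := by
        simp only [mask, if_pos hm]; exact hx _ h0
      refine ⟨⟨(s, mask s u), hs2, hminprop _ h0'⟩, Subtype.ext (Prod.ext ?_ ?_)⟩
      · show sq s (mask s u) = f
        rw [hfu, (sq_congr (mask_mem_sq (Finset.Subset.refl s) : mask s u ∈ sq s u))]
      · show ({mask s u, mask s (mask s u)} : Finset Q4Vertex) = {u, v}
        rw [mask_mask, ← hvm, Finset.pair_comm]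

end Q4Aux

namespace Q4Aux

instance instDecQ4Incid (p : Q4Point) (b : Q4Block) : Decidable (Q4Incid p b) :=
  match p with
  | Sum.inl v => (inferInstance : Decidable (v ∈ b.1.2))
  | Sum.inr e => (inferInstance : Decidable (e.1 ⊆ b.1.1))

noncomputable def epsEquiv : E' ≃ {e : Finset Q4Vertex // IsQ4Edge e} :=
  Equiv.ofBijective eps eps_bijective

noncomputable def betaEquiv : B' ≃ Q4Block :=
  Equiv.ofBijective beta beta_bijective

noncomputable def piEquiv : Q4Vertex ⊕ E' ≃ Q4Point :=
  Equiv.sumCongr (Equiv.refl Q4Vertex) epsEquiv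

lemma card_trans {α β : Type*} (e : α ≃ β) (p : β → Prop) :
    Nat.card {b // p b} = Nat.card {a // p (e a)} :=
  (Nat.card_congr (Equiv.subtypeEquiv e fun _ => Iff.rfl)).symm

end Q4Aux

open Q4Aux in

/-- The incidence structure on the 16 vertices and 32 edge-midpoints of the 4-cube,
with the 48 blocks given by the squares counted twice via their two pairs of opposite
vertices (each block consisting of the 4 edge-midpoints and 2 opposite vertices of its
square), is a balanced combinatorial configuration of type (48₆): it has 48 points,
48 blocks, each point is on exactly 6 blocks and each block contains exactly 6
points. -/
theorem q4_48_6_configuration :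
    Nat.card Q4Point = 48 ∧
    Nat.card Q4Block = 48 ∧
    (∀ p : Q4Point, Set.ncard {b : Q4Block | Q4Incid p b} = 6) ∧
    (∀ b : Q4Block, Set.ncard {p : Q4Point | Q4Incid p b} = 6) := by
  have key1 : Fintype.card (Q4Vertex ⊕ E') = 48 := by decide
  have key2 : Fintype.card B' = 48 := by decide
  have key3a : ∀ w : Q4Vertex, Fintype.card {x : B' // Q4Incid (Sum.inl w) (beta x)} = 6 := by
    decide
  have key3b : ∀ q : E', Fintype.card {x : B' // Q4Incid (Sum.inr (eps q)) (beta x)} = 6 := by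
    decide
  have key4 : ∀ x : B',
      Fintype.card {p' : Q4Vertex ⊕ E' // Q4Incid (piEquiv p') (beta x)} = 6 := by
    decide
  refine ⟨?_, ?_, ?_, ?_⟩
  · rw [Nat.card_congr piEquiv.symm, Nat.card_eq_fintype_card, key1]
  · rw [Nat.card_congr betaEquiv.symm, Nat.card_eq_fintype_card, key2]
  · intro p
    rw [← Nat.card_coe_set_eq]
    obtain ⟨p', rfl⟩ := piEquiv.surjective p
    rcases p' with w | q
    · exact (card_trans betaEquiv _).trans
        ((Nat.card_eq_fintype_card).trans (key3a w))
    · exact (card_trans betaEquiv _).trans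
        ((Nat.card_eq_fintype_card).trans (key3b q))
  · intro b
    rw [← Nat.card_coe_set_eq]
    obtain ⟨x, rfl⟩ := betaEquiv.surjective b
    exact (card_trans piEquiv _).trans
      ((Nat.card_eq_fintype_card).trans (key4 x))
end

section
/- The regular 24-cell has 24 octahedral facets, 24 vertices, and 96 edges, and every edge is contained in exactly three octahedral facets; consequently, inscribing in each octahedral facet the four regular hexagons whose vertices are midpoints of edges (each octahedron containing 4 such hexagons, each edge-midpoint of an octahedron lying on exactly 2 of its 4 hexagons) yields an incidence structure on the 96 edge-midpoints and 96 hexagons in which every point lies on exactly 6 hexagons and every hexagon contains exactly 6 points, i.e., a balanced combinatorial configuration of type (96_6). -/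
open Finset in
/-- Standard inner product on ℝ⁴. -/
def dot4 (u v : Fin 4 → ℝ) : ℝ := ∑ i, u i * v i

/-- The 24 vertices of the regular 24-cell: all permutations of (±1, ±1, 0, 0). -/
def Cell24Vertices : Set (Fin 4 → ℝ) :=
  {v | ∃ i j : Fin 4, i ≠ j ∧ (v i = 1 ∨ v i = -1) ∧ (v j = 1 ∨ v j = -1) ∧
    ∀ k, k ≠ i → k ≠ j → v k = 0}

/-- The 24 facet normals of the 24-cell: the facet with normal `c` is the octahedron
with vertex set {v | ⟪v, c⟫ = 1}. -/
def Cell24Facets : Set (Fin 4 → ℝ) :=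
  {c | (∃ i : Fin 4, (c i = 1 ∨ c i = -1) ∧ ∀ k, k ≠ i → c k = 0) ∨
    (∀ k, c k = 1 / 2 ∨ c k = -1 / 2)}

/-- Two vertices of the 24-cell are adjacent (joined by an edge) iff their inner
product equals 1 (equivalently, they are at minimal distance). -/
def Cell24Adj (u v : Fin 4 → ℝ) : Prop :=
  u ∈ Cell24Vertices ∧ v ∈ Cell24Vertices ∧ dot4 u v = 1

/-- `m` is the midpoint of an edge of the 24-cell. -/
def Cell24Mid (m : Fin 4 → ℝ) : Prop :=
  ∃ u v, Cell24Adj u v ∧ m = (1 / 2 : ℝ) • (u + v)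

/-- `t` is a (triangular) 2-face of the octahedral facet with normal `c`: three
mutually adjacent vertices lying on that facet. -/
def Cell24Face (c : Fin 4 → ℝ) (t : Set (Fin 4 → ℝ)) : Prop :=
  c ∈ Cell24Facets ∧ ∃ u v w, u ≠ v ∧ u ≠ w ∧ v ≠ w ∧
    t = ({u, v, w} : Set (Fin 4 → ℝ)) ∧
    Cell24Adj u v ∧ Cell24Adj u w ∧ Cell24Adj v w ∧
    dot4 u c = 1 ∧ dot4 v c = 1 ∧ dot4 w c = 1

/-- The regular hexagon inscribed in the octahedral facet with normal `c` determined
by the pair of opposite faces {t, −t}: the set of midpoints of the edges joining a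
vertex of `t` to a vertex of the face opposite to `t` (the reflection of `t` in the
facet centre `c`). -/
def Cell24Hex (c : Fin 4 → ℝ) (t : Set (Fin 4 → ℝ)) : Set (Fin 4 → ℝ) :=
  {m | ∃ u w, u ∈ t ∧ ((2 : ℝ) • c - w) ∈ t ∧ Cell24Adj u w ∧
    m = (1 / 2 : ℝ) • (u + w)}

/-- `H` is one of the inscribed hexagons of the 24-cell. -/
def Cell24IsHex (H : Set (Fin 4 → ℝ)) : Prop :=
  ∃ c t, Cell24Face c t ∧ H = Cell24Hex c t

/-! ### An integer model of the 24-cell, scaled by a factor of 2. -/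

/-- Integer vectors representing points of ℝ⁴ scaled by 2. -/
abbrev Z4 := Fin 4 → ℤ

/-- Integer dot product. -/
def dotZ (u v : Z4) : ℤ := u 0 * v 0 + u 1 * v 1 + u 2 * v 2 + u 3 * v 3

/-- Sign of a boolean. -/
def sg (b : Bool) : ℤ := if b then 1 else -1

/-- Vector with value `a` at `i`, `b` at `j`, `0` elsewhere. -/
def mkV (i j : Fin 4) (a b : ℤ) : Z4 := fun k => if k = i then a else if k = j then b else 0

/-- Vector with the four given coordinates of the form `±1`. -/
def mkB (p : Bool × Bool × Bool × Bool) : Z4 :=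
  fun k => if k = 0 then sg p.1 else if k = 1 then sg p.2.1 else
    if k = 2 then sg p.2.2.1 else sg p.2.2.2

def addV (u v : Z4) : Z4 := fun k => u k + v k
def subV (u v : Z4) : Z4 := fun k => u k - v k
def dblV (u : Z4) : Z4 := fun k => 2 * u k
def hfV (u : Z4) : Z4 := fun k => u k / 2

/-- Interpretation of an integer vector as a real vector (dividing by the scale 2). -/
noncomputable def ι (z : Z4) : Fin 4 → ℝ := fun i => (z i : ℝ) / 2

/-- Integer model of the vertex set (vertices scaled by 2). -/
def Vz : Finset Z4 :=
  ((Finset.univ : Finset ((Fin 4 × Fin 4) × Bool × Bool)).filter (fun p => p.1.1 ≠ p.1.2)).image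
    (fun p => mkV p.1.1 p.1.2 (2 * sg p.2.1) (2 * sg p.2.2))

/-- Integer model of the facet-normal set (normals scaled by 2). -/
def Fz : Finset Z4 :=
  ((Finset.univ : Finset (Fin 4 × Bool)).image (fun p => mkV p.1 p.1 (2 * sg p.2) (2 * sg p.2))) ∪
  ((Finset.univ : Finset (Bool × Bool × Bool × Bool)).image mkB)

/-- Integer model of the (ordered) edges. -/
def EdgesZ : Finset (Z4 × Z4) := (Vz ×ˢ Vz).filter (fun p => dotZ p.1 p.2 = 4)

/-- Integer model of the edge midpoints (scaled by 2). -/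
def Mz : Finset Z4 := EdgesZ.image (fun p => hfV (addV p.1 p.2))

/-- Vertices on the facet with normal `c`. -/
def VonC (c : Z4) : Finset Z4 := Vz.filter (fun v => dotZ v c = 4)

/-- Integer model of the triangular faces of the facet with normal `c`. -/
def faceZ (c : Z4) : Finset (Finset Z4) :=
  ((VonC c).powersetCard 3).filter (fun s => ∀ u ∈ s, ∀ v ∈ s, u ≠ v → dotZ u v = 4)

/-- Integer model of the hexagon determined by facet `c` and face `s`. -/
def hexZ (c : Z4) (s : Finset Z4) : Finset Z4 :=
  ((s ×ˢ s).filter (fun pr => pr.1 ∈ Vz ∧ (subV (dblV c) pr.2) ∈ Vz ∧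
      dotZ pr.1 (subV (dblV c) pr.2) = 4)).image
    (fun pr => hfV (addV pr.1 (subV (dblV c) pr.2)))

/-- The hexagons of the facet with normal `c`. -/
def hexesZ (c : Z4) : Finset (Finset Z4) := (faceZ c).image (hexZ c)

/-- All hexagons. -/
def AllHexZ : Finset (Finset Z4) := Fz.biUnion hexesZ

set_option maxRecDepth 1000000
set_option maxHeartbeats 4000000

theorem D1 : Vz.card = 24 := by decide
theorem D2 : Fz.card = 24 := by decide
theorem D3 : Mz.card = 96 := by decide
theorem D4 : ∀ p ∈ EdgesZ, (Fz.filter (fun z => dotZ p.1 z = 4 ∧ dotZ p.2 z = 4)).card = 3 := by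
  decide

/-- Helper to write integer vectors. -/
def mkQ (a b c d : ℤ) : Z4 :=
  fun k => if k = 0 then a else if k = 1 then b else if k = 2 then c else d

/-- Precomputed table of the hexagons of each facet. -/
def HexLT : List (Z4 × Finset (Finset Z4)) := [
  (mkQ (2) (0) (0) (0), ({{mkQ (2) (-1) (0) (1), mkQ (2) (-1) (1) (0), mkQ (2) (0) (-1) (1), mkQ (2) (0) (1) (-1), mkQ (2) (1) (-1) (0), mkQ (2) (1) (0) (-1)}, {mkQ (2) (-1) (-1) (0), mkQ (2) (-1) (0) (-1), mkQ (2) (0) (-1) (1), mkQ (2) (0) (1) (-1), mkQ (2) (1) (0) (1), mkQ (2) (1) (1) (0)}, {mkQ (2) (-1) (-1) (0), mkQ (2) (-1) (0) (1), mkQ (2) (0) (-1) (-1), mkQ (2) (0) (1) (1), mkQ (2) (1) (0) (-1), mkQ (2) (1) (1) (0)}, {mkQ (2) (-1) (0) (-1), mkQ (2) (-1) (1) (0), mkQ (2) (0) (-1) (-1), mkQ (2) (0) (1) (1), mkQ (2) (1) (-1) (0), mkQ (2) (1) (0) (1)}} : Finset (Finset Z4))),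
  (mkQ (-2) (0) (0) (0), ({{mkQ (-2) (-1) (0) (1), mkQ (-2) (-1) (1) (0), mkQ (-2) (0) (-1) (1), mkQ (-2) (0) (1) (-1), mkQ (-2) (1) (-1) (0), mkQ (-2) (1) (0) (-1)}, {mkQ (-2) (-1) (-1) (0), mkQ (-2) (-1) (0) (-1), mkQ (-2) (0) (-1) (1), mkQ (-2) (0) (1) (-1), mkQ (-2) (1) (0) (1), mkQ (-2) (1) (1) (0)}, {mkQ (-2) (-1) (-1) (0), mkQ (-2) (-1) (0) (1), mkQ (-2) (0) (-1) (-1), mkQ (-2) (0) (1) (1), mkQ (-2) (1) (0) (-1), mkQ (-2) (1) (1) (0)}, {mkQ (-2) (-1) (0) (-1), mkQ (-2) (-1) (1) (0), mkQ (-2) (0) (-1) (-1), mkQ (-2) (0) (1) (1), mkQ (-2) (1) (-1) (0), mkQ (-2) (1) (0) (1)}} : Finset (Finset Z4))),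
  (mkQ (0) (2) (0) (0), ({{mkQ (-1) (2) (0) (1), mkQ (-1) (2) (1) (0), mkQ (0) (2) (-1) (1), mkQ (0) (2) (1) (-1), mkQ (1) (2) (-1) (0), mkQ (1) (2) (0) (-1)}, {mkQ (-1) (2) (-1) (0), mkQ (-1) (2) (0) (-1), mkQ (0) (2) (-1) (1), mkQ (0) (2) (1) (-1), mkQ (1) (2) (0) (1), mkQ (1) (2) (1) (0)}, {mkQ (-1) (2) (-1) (0), mkQ (-1) (2) (0) (1), mkQ (0) (2) (-1) (-1), mkQ (0) (2) (1) (1), mkQ (1) (2) (0) (-1), mkQ (1) (2) (1) (0)}, {mkQ (-1) (2) (0) (-1), mkQ (-1) (2) (1) (0), mkQ (0) (2) (-1) (-1), mkQ (0) (2) (1) (1), mkQ (1) (2) (-1) (0), mkQ (1) (2) (0) (1)}} : Finset (Finset Z4))),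
  (mkQ (0) (-2) (0) (0), ({{mkQ (-1) (-2) (0) (1), mkQ (-1) (-2) (1) (0), mkQ (0) (-2) (-1) (1), mkQ (0) (-2) (1) (-1), mkQ (1) (-2) (-1) (0), mkQ (1) (-2) (0) (-1)}, {mkQ (-1) (-2) (-1) (0), mkQ (-1) (-2) (0) (-1), mkQ (0) (-2) (-1) (1), mkQ (0) (-2) (1) (-1), mkQ (1) (-2) (0) (1), mkQ (1) (-2) (1) (0)}, {mkQ (-1) (-2) (-1) (0), mkQ (-1) (-2) (0) (1), mkQ (0) (-2) (-1) (-1), mkQ (0) (-2) (1) (1), mkQ (1) (-2) (0) (-1), mkQ (1) (-2) (1) (0)}, {mkQ (-1) (-2) (0) (-1), mkQ (-1) (-2) (1) (0), mkQ (0) (-2) (-1) (-1), mkQ (0) (-2) (1) (1), mkQ (1) (-2) (-1) (0), mkQ (1) (-2) (0) (1)}} : Finset (Finset Z4))),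
  (mkQ (0) (0) (2) (0), ({{mkQ (-1) (0) (2) (1), mkQ (-1) (1) (2) (0), mkQ (0) (-1) (2) (1), mkQ (0) (1) (2) (-1), mkQ (1) (-1) (2) (0), mkQ (1) (0) (2) (-1)}, {mkQ (-1) (-1) (2) (0), mkQ (-1) (0) (2) (-1), mkQ (0) (-1) (2) (1), mkQ (0) (1) (2) (-1), mkQ (1) (0) (2) (1), mkQ (1) (1) (2) (0)}, {mkQ (-1) (-1) (2) (0), mkQ (-1) (0) (2) (1), mkQ (0) (-1) (2) (-1), mkQ (0) (1) (2) (1), mkQ (1) (0) (2) (-1), mkQ (1) (1) (2) (0)}, {mkQ (-1) (0) (2) (-1), mkQ (-1) (1) (2) (0), mkQ (0) (-1) (2) (-1), mkQ (0) (1) (2) (1), mkQ (1) (-1) (2) (0), mkQ (1) (0) (2) (1)}} : Finset (Finset Z4))),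
  (mkQ (0) (0) (-2) (0), ({{mkQ (-1) (0) (-2) (1), mkQ (-1) (1) (-2) (0), mkQ (0) (-1) (-2) (1), mkQ (0) (1) (-2) (-1), mkQ (1) (-1) (-2) (0), mkQ (1) (0) (-2) (-1)}, {mkQ (-1) (-1) (-2) (0), mkQ (-1) (0) (-2) (-1), mkQ (0) (-1) (-2) (1), mkQ (0) (1) (-2) (-1), mkQ (1) (0) (-2) (1), mkQ (1) (1) (-2) (0)}, {mkQ (-1) (-1) (-2) (0), mkQ (-1) (0) (-2) (1), mkQ (0) (-1) (-2) (-1), mkQ (0) (1) (-2) (1), mkQ (1) (0) (-2) (-1), mkQ (1) (1) (-2) (0)}, {mkQ (-1) (0) (-2) (-1), mkQ (-1) (1) (-2) (0), mkQ (0) (-1) (-2) (-1), mkQ (0) (1) (-2) (1), mkQ (1) (-1) (-2) (0), mkQ (1) (0) (-2) (1)}} : Finset (Finset Z4))),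
  (mkQ (0) (0) (0) (2), ({{mkQ (-1) (0) (1) (2), mkQ (-1) (1) (0) (2), mkQ (0) (-1) (1) (2), mkQ (0) (1) (-1) (2), mkQ (1) (-1) (0) (2), mkQ (1) (0) (-1) (2)}, {mkQ (-1) (-1) (0) (2), mkQ (-1) (0) (-1) (2), mkQ (0) (-1) (1) (2), mkQ (0) (1) (-1) (2), mkQ (1) (0) (1) (2), mkQ (1) (1) (0) (2)}, {mkQ (-1) (-1) (0) (2), mkQ (-1) (0) (1) (2), mkQ (0) (-1) (-1) (2), mkQ (0) (1) (1) (2), mkQ (1) (0) (-1) (2), mkQ (1) (1) (0) (2)}, {mkQ (-1) (0) (-1) (2), mkQ (-1) (1) (0) (2), mkQ (0) (-1) (-1) (2), mkQ (0) (1) (1) (2), mkQ (1) (-1) (0) (2), mkQ (1) (0) (1) (2)}} : Finset (Finset Z4))),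
  (mkQ (0) (0) (0) (-2), ({{mkQ (-1) (0) (1) (-2), mkQ (-1) (1) (0) (-2), mkQ (0) (-1) (1) (-2), mkQ (0) (1) (-1) (-2), mkQ (1) (-1) (0) (-2), mkQ (1) (0) (-1) (-2)}, {mkQ (-1) (-1) (0) (-2), mkQ (-1) (0) (-1) (-2), mkQ (0) (-1) (1) (-2), mkQ (0) (1) (-1) (-2), mkQ (1) (0) (1) (-2), mkQ (1) (1) (0) (-2)}, {mkQ (-1) (-1) (0) (-2), mkQ (-1) (0) (1) (-2), mkQ (0) (-1) (-1) (-2), mkQ (0) (1) (1) (-2), mkQ (1) (0) (-1) (-2), mkQ (1) (1) (0) (-2)}, {mkQ (-1) (0) (-1) (-2), mkQ (-1) (1) (0) (-2), mkQ (0) (-1) (-1) (-2), mkQ (0) (1) (1) (-2), mkQ (1) (-1) (0) (-2), mkQ (1) (0) (1) (-2)}} : Finset (Finset Z4))),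
  (mkQ (1) (1) (1) (1), ({{mkQ (1) (0) (1) (2), mkQ (1) (0) (2) (1), mkQ (1) (1) (0) (2), mkQ (1) (1) (2) (0), mkQ (1) (2) (0) (1), mkQ (1) (2) (1) (0)}, {mkQ (0) (1) (2) (1), mkQ (0) (2) (1) (1), mkQ (1) (0) (2) (1), mkQ (1) (2) (0) (1), mkQ (2) (0) (1) (1), mkQ (2) (1) (0) (1)}, {mkQ (0) (1) (1) (2), mkQ (0) (2) (1) (1), mkQ (1) (0) (1) (2), mkQ (1) (2) (1) (0), mkQ (2) (0) (1) (1), mkQ (2) (1) (1) (0)}, {mkQ (0) (1) (1) (2), mkQ (0) (1) (2) (1), mkQ (1) (1) (0) (2), mkQ (1) (1) (2) (0), mkQ (2) (1) (0) (1), mkQ (2) (1) (1) (0)}} : Finset (Finset Z4))),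
  (mkQ (1) (1) (1) (-1), ({{mkQ (1) (0) (1) (-2), mkQ (1) (0) (2) (-1), mkQ (1) (1) (0) (-2), mkQ (1) (1) (2) (0), mkQ (1) (2) (0) (-1), mkQ (1) (2) (1) (0)}, {mkQ (0) (1) (2) (-1), mkQ (0) (2) (1) (-1), mkQ (1) (0) (2) (-1), mkQ (1) (2) (0) (-1), mkQ (2) (0) (1) (-1), mkQ (2) (1) (0) (-1)}, {mkQ (0) (1) (1) (-2), mkQ (0) (2) (1) (-1), mkQ (1) (0) (1) (-2), mkQ (1) (2) (1) (0), mkQ (2) (0) (1) (-1), mkQ (2) (1) (1) (0)}, {mkQ (0) (1) (1) (-2), mkQ (0) (1) (2) (-1), mkQ (1) (1) (0) (-2), mkQ (1) (1) (2) (0), mkQ (2) (1) (0) (-1), mkQ (2) (1) (1) (0)}} : Finset (Finset Z4))),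
  (mkQ (1) (1) (-1) (1), ({{mkQ (1) (0) (-2) (1), mkQ (1) (0) (-1) (2), mkQ (1) (1) (-2) (0), mkQ (1) (1) (0) (2), mkQ (1) (2) (-1) (0), mkQ (1) (2) (0) (1)}, {mkQ (0) (1) (-2) (1), mkQ (0) (2) (-1) (1), mkQ (1) (0) (-2) (1), mkQ (1) (2) (0) (1), mkQ (2) (0) (-1) (1), mkQ (2) (1) (0) (1)}, {mkQ (0) (1) (-1) (2), mkQ (0) (2) (-1) (1), mkQ (1) (0) (-1) (2), mkQ (1) (2) (-1) (0), mkQ (2) (0) (-1) (1), mkQ (2) (1) (-1) (0)}, {mkQ (0) (1) (-2) (1), mkQ (0) (1) (-1) (2), mkQ (1) (1) (-2) (0), mkQ (1) (1) (0) (2), mkQ (2) (1) (-1) (0), mkQ (2) (1) (0) (1)}} : Finset (Finset Z4))),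
  (mkQ (1) (1) (-1) (-1), ({{mkQ (1) (0) (-2) (-1), mkQ (1) (0) (-1) (-2), mkQ (1) (1) (-2) (0), mkQ (1) (1) (0) (-2), mkQ (1) (2) (-1) (0), mkQ (1) (2) (0) (-1)}, {mkQ (0) (1) (-2) (-1), mkQ (0) (2) (-1) (-1), mkQ (1) (0) (-2) (-1), mkQ (1) (2) (0) (-1), mkQ (2) (0) (-1) (-1), mkQ (2) (1) (0) (-1)}, {mkQ (0) (1) (-1) (-2), mkQ (0) (2) (-1) (-1), mkQ (1) (0) (-1) (-2), mkQ (1) (2) (-1) (0), mkQ (2) (0) (-1) (-1), mkQ (2) (1) (-1) (0)}, {mkQ (0) (1) (-2) (-1), mkQ (0) (1) (-1) (-2), mkQ (1) (1) (-2) (0), mkQ (1) (1) (0) (-2), mkQ (2) (1) (-1) (0), mkQ (2) (1) (0) (-1)}} : Finset (Finset Z4))),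
  (mkQ (1) (-1) (1) (1), ({{mkQ (1) (-2) (0) (1), mkQ (1) (-2) (1) (0), mkQ (1) (-1) (0) (2), mkQ (1) (-1) (2) (0), mkQ (1) (0) (1) (2), mkQ (1) (0) (2) (1)}, {mkQ (0) (-2) (1) (1), mkQ (0) (-1) (2) (1), mkQ (1) (-2) (0) (1), mkQ (1) (0) (2) (1), mkQ (2) (-1) (0) (1), mkQ (2) (0) (1) (1)}, {mkQ (0) (-2) (1) (1), mkQ (0) (-1) (1) (2), mkQ (1) (-2) (1) (0), mkQ (1) (0) (1) (2), mkQ (2) (-1) (1) (0), mkQ (2) (0) (1) (1)}, {mkQ (0) (-1) (1) (2), mkQ (0) (-1) (2) (1), mkQ (1) (-1) (0) (2), mkQ (1) (-1) (2) (0), mkQ (2) (-1) (0) (1), mkQ (2) (-1) (1) (0)}} : Finset (Finset Z4))),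
  (mkQ (1) (-1) (1) (-1), ({{mkQ (1) (-2) (0) (-1), mkQ (1) (-2) (1) (0), mkQ (1) (-1) (0) (-2), mkQ (1) (-1) (2) (0), mkQ (1) (0) (1) (-2), mkQ (1) (0) (2) (-1)}, {mkQ (0) (-2) (1) (-1), mkQ (0) (-1) (2) (-1), mkQ (1) (-2) (0) (-1), mkQ (1) (0) (2) (-1), mkQ (2) (-1) (0) (-1), mkQ (2) (0) (1) (-1)}, {mkQ (0) (-2) (1) (-1), mkQ (0) (-1) (1) (-2), mkQ (1) (-2) (1) (0), mkQ (1) (0) (1) (-2), mkQ (2) (-1) (1) (0), mkQ (2) (0) (1) (-1)}, {mkQ (0) (-1) (1) (-2), mkQ (0) (-1) (2) (-1), mkQ (1) (-1) (0) (-2), mkQ (1) (-1) (2) (0), mkQ (2) (-1) (0) (-1), mkQ (2) (-1) (1) (0)}} : Finset (Finset Z4))),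
  (mkQ (1) (-1) (-1) (1), ({{mkQ (1) (-2) (-1) (0), mkQ (1) (-2) (0) (1), mkQ (1) (-1) (-2) (0), mkQ (1) (-1) (0) (2), mkQ (1) (0) (-2) (1), mkQ (1) (0) (-1) (2)}, {mkQ (0) (-2) (-1) (1), mkQ (0) (-1) (-2) (1), mkQ (1) (-2) (0) (1), mkQ (1) (0) (-2) (1), mkQ (2) (-1) (0) (1), mkQ (2) (0) (-1) (1)}, {mkQ (0) (-2) (-1) (1), mkQ (0) (-1) (-1) (2), mkQ (1) (-2) (-1) (0), mkQ (1) (0) (-1) (2), mkQ (2) (-1) (-1) (0), mkQ (2) (0) (-1) (1)}, {mkQ (0) (-1) (-2) (1), mkQ (0) (-1) (-1) (2), mkQ (1) (-1) (-2) (0), mkQ (1) (-1) (0) (2), mkQ (2) (-1) (-1) (0), mkQ (2) (-1) (0) (1)}} : Finset (Finset Z4))),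
  (mkQ (1) (-1) (-1) (-1), ({{mkQ (1) (-2) (-1) (0), mkQ (1) (-2) (0) (-1), mkQ (1) (-1) (-2) (0), mkQ (1) (-1) (0) (-2), mkQ (1) (0) (-2) (-1), mkQ (1) (0) (-1) (-2)}, {mkQ (0) (-2) (-1) (-1), mkQ (0) (-1) (-2) (-1), mkQ (1) (-2) (0) (-1), mkQ (1) (0) (-2) (-1), mkQ (2) (-1) (0) (-1), mkQ (2) (0) (-1) (-1)}, {mkQ (0) (-2) (-1) (-1), mkQ (0) (-1) (-1) (-2), mkQ (1) (-2) (-1) (0), mkQ (1) (0) (-1) (-2), mkQ (2) (-1) (-1) (0), mkQ (2) (0) (-1) (-1)}, {mkQ (0) (-1) (-2) (-1), mkQ (0) (-1) (-1) (-2), mkQ (1) (-1) (-2) (0), mkQ (1) (-1) (0) (-2), mkQ (2) (-1) (-1) (0), mkQ (2) (-1) (0) (-1)}} : Finset (Finset Z4))),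
  (mkQ (-1) (1) (1) (1), ({{mkQ (-1) (0) (1) (2), mkQ (-1) (0) (2) (1), mkQ (-1) (1) (0) (2), mkQ (-1) (1) (2) (0), mkQ (-1) (2) (0) (1), mkQ (-1) (2) (1) (0)}, {mkQ (-2) (0) (1) (1), mkQ (-2) (1) (0) (1), mkQ (-1) (0) (2) (1), mkQ (-1) (2) (0) (1), mkQ (0) (1) (2) (1), mkQ (0) (2) (1) (1)}, {mkQ (-2) (0) (1) (1), mkQ (-2) (1) (1) (0), mkQ (-1) (0) (1) (2), mkQ (-1) (2) (1) (0), mkQ (0) (1) (1) (2), mkQ (0) (2) (1) (1)}, {mkQ (-2) (1) (0) (1), mkQ (-2) (1) (1) (0), mkQ (-1) (1) (0) (2), mkQ (-1) (1) (2) (0), mkQ (0) (1) (1) (2), mkQ (0) (1) (2) (1)}} : Finset (Finset Z4))),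
  (mkQ (-1) (1) (1) (-1), ({{mkQ (-1) (0) (1) (-2), mkQ (-1) (0) (2) (-1), mkQ (-1) (1) (0) (-2), mkQ (-1) (1) (2) (0), mkQ (-1) (2) (0) (-1), mkQ (-1) (2) (1) (0)}, {mkQ (-2) (0) (1) (-1), mkQ (-2) (1) (0) (-1), mkQ (-1) (0) (2) (-1), mkQ (-1) (2) (0) (-1), mkQ (0) (1) (2) (-1), mkQ (0) (2) (1) (-1)}, {mkQ (-2) (0) (1) (-1), mkQ (-2) (1) (1) (0), mkQ (-1) (0) (1) (-2), mkQ (-1) (2) (1) (0), mkQ (0) (1) (1) (-2), mkQ (0) (2) (1) (-1)}, {mkQ (-2) (1) (0) (-1), mkQ (-2) (1) (1) (0), mkQ (-1) (1) (0) (-2), mkQ (-1) (1) (2) (0), mkQ (0) (1) (1) (-2), mkQ (0) (1) (2) (-1)}} : Finset (Finset Z4))),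
  (mkQ (-1) (1) (-1) (1), ({{mkQ (-1) (0) (-2) (1), mkQ (-1) (0) (-1) (2), mkQ (-1) (1) (-2) (0), mkQ (-1) (1) (0) (2), mkQ (-1) (2) (-1) (0), mkQ (-1) (2) (0) (1)}, {mkQ (-2) (0) (-1) (1), mkQ (-2) (1) (0) (1), mkQ (-1) (0) (-2) (1), mkQ (-1) (2) (0) (1), mkQ (0) (1) (-2) (1), mkQ (0) (2) (-1) (1)}, {mkQ (-2) (0) (-1) (1), mkQ (-2) (1) (-1) (0), mkQ (-1) (0) (-1) (2), mkQ (-1) (2) (-1) (0), mkQ (0) (1) (-1) (2), mkQ (0) (2) (-1) (1)}, {mkQ (-2) (1) (-1) (0), mkQ (-2) (1) (0) (1), mkQ (-1) (1) (-2) (0), mkQ (-1) (1) (0) (2), mkQ (0) (1) (-2) (1), mkQ (0) (1) (-1) (2)}} : Finset (Finset Z4))),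
  (mkQ (-1) (1) (-1) (-1), ({{mkQ (-1) (0) (-2) (-1), mkQ (-1) (0) (-1) (-2), mkQ (-1) (1) (-2) (0), mkQ (-1) (1) (0) (-2), mkQ (-1) (2) (-1) (0), mkQ (-1) (2) (0) (-1)}, {mkQ (-2) (0) (-1) (-1), mkQ (-2) (1) (0) (-1), mkQ (-1) (0) (-2) (-1), mkQ (-1) (2) (0) (-1), mkQ (0) (1) (-2) (-1), mkQ (0) (2) (-1) (-1)}, {mkQ (-2) (0) (-1) (-1), mkQ (-2) (1) (-1) (0), mkQ (-1) (0) (-1) (-2), mkQ (-1) (2) (-1) (0), mkQ (0) (1) (-1) (-2), mkQ (0) (2) (-1) (-1)}, {mkQ (-2) (1) (-1) (0), mkQ (-2) (1) (0) (-1), mkQ (-1) (1) (-2) (0), mkQ (-1) (1) (0) (-2), mkQ (0) (1) (-2) (-1), mkQ (0) (1) (-1) (-2)}} : Finset (Finset Z4))),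
  (mkQ (-1) (-1) (1) (1), ({{mkQ (-1) (-2) (0) (1), mkQ (-1) (-2) (1) (0), mkQ (-1) (-1) (0) (2), mkQ (-1) (-1) (2) (0), mkQ (-1) (0) (1) (2), mkQ (-1) (0) (2) (1)}, {mkQ (-2) (-1) (0) (1), mkQ (-2) (0) (1) (1), mkQ (-1) (-2) (0) (1), mkQ (-1) (0) (2) (1), mkQ (0) (-2) (1) (1), mkQ (0) (-1) (2) (1)}, {mkQ (-2) (-1) (1) (0), mkQ (-2) (0) (1) (1), mkQ (-1) (-2) (1) (0), mkQ (-1) (0) (1) (2), mkQ (0) (-2) (1) (1), mkQ (0) (-1) (1) (2)}, {mkQ (-2) (-1) (0) (1), mkQ (-2) (-1) (1) (0), mkQ (-1) (-1) (0) (2), mkQ (-1) (-1) (2) (0), mkQ (0) (-1) (1) (2), mkQ (0) (-1) (2) (1)}} : Finset (Finset Z4))),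
  (mkQ (-1) (-1) (1) (-1), ({{mkQ (-1) (-2) (0) (-1), mkQ (-1) (-2) (1) (0), mkQ (-1) (-1) (0) (-2), mkQ (-1) (-1) (2) (0), mkQ (-1) (0) (1) (-2), mkQ (-1) (0) (2) (-1)}, {mkQ (-2) (-1) (0) (-1), mkQ (-2) (0) (1) (-1), mkQ (-1) (-2) (0) (-1), mkQ (-1) (0) (2) (-1), mkQ (0) (-2) (1) (-1), mkQ (0) (-1) (2) (-1)}, {mkQ (-2) (-1) (1) (0), mkQ (-2) (0) (1) (-1), mkQ (-1) (-2) (1) (0), mkQ (-1) (0) (1) (-2), mkQ (0) (-2) (1) (-1), mkQ (0) (-1) (1) (-2)}, {mkQ (-2) (-1) (0) (-1), mkQ (-2) (-1) (1) (0), mkQ (-1) (-1) (0) (-2), mkQ (-1) (-1) (2) (0), mkQ (0) (-1) (1) (-2), mkQ (0) (-1) (2) (-1)}} : Finset (Finset Z4))),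
  (mkQ (-1) (-1) (-1) (1), ({{mkQ (-1) (-2) (-1) (0), mkQ (-1) (-2) (0) (1), mkQ (-1) (-1) (-2) (0), mkQ (-1) (-1) (0) (2), mkQ (-1) (0) (-2) (1), mkQ (-1) (0) (-1) (2)}, {mkQ (-2) (-1) (0) (1), mkQ (-2) (0) (-1) (1), mkQ (-1) (-2) (0) (1), mkQ (-1) (0) (-2) (1), mkQ (0) (-2) (-1) (1), mkQ (0) (-1) (-2) (1)}, {mkQ (-2) (-1) (-1) (0), mkQ (-2) (0) (-1) (1), mkQ (-1) (-2) (-1) (0), mkQ (-1) (0) (-1) (2), mkQ (0) (-2) (-1) (1), mkQ (0) (-1) (-1) (2)}, {mkQ (-2) (-1) (-1) (0), mkQ (-2) (-1) (0) (1), mkQ (-1) (-1) (-2) (0), mkQ (-1) (-1) (0) (2), mkQ (0) (-1) (-2) (1), mkQ (0) (-1) (-1) (2)}} : Finset (Finset Z4))),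
  (mkQ (-1) (-1) (-1) (-1), ({{mkQ (-1) (-2) (-1) (0), mkQ (-1) (-2) (0) (-1), mkQ (-1) (-1) (-2) (0), mkQ (-1) (-1) (0) (-2), mkQ (-1) (0) (-2) (-1), mkQ (-1) (0) (-1) (-2)}, {mkQ (-2) (-1) (0) (-1), mkQ (-2) (0) (-1) (-1), mkQ (-1) (-2) (0) (-1), mkQ (-1) (0) (-2) (-1), mkQ (0) (-2) (-1) (-1), mkQ (0) (-1) (-2) (-1)}, {mkQ (-2) (-1) (-1) (0), mkQ (-2) (0) (-1) (-1), mkQ (-1) (-2) (-1) (0), mkQ (-1) (0) (-1) (-2), mkQ (0) (-2) (-1) (-1), mkQ (0) (-1) (-1) (-2)}, {mkQ (-2) (-1) (-1) (0), mkQ (-2) (-1) (0) (-1), mkQ (-1) (-1) (-2) (0), mkQ (-1) (-1) (0) (-2), mkQ (0) (-1) (-2) (-1), mkQ (0) (-1) (-1) (-2)}} : Finset (Finset Z4)))]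

/-- Table lookup of the hexagons of a facet. -/
def hexTab (c : Z4) : Finset (Finset Z4) :=
  match HexLT.find? (fun p => p.1 == c) with
  | some p => p.2
  | none => ∅

theorem TAB : ∀ c ∈ Fz, hexesZ c = hexTab c := by decide

theorem D5' : ∀ c ∈ Fz, (hexTab c).card = 4 := by decide
theorem D6' : ∀ c ∈ Fz, ∀ p ∈ EdgesZ, dotZ p.1 c = 4 → dotZ p.2 c = 4 →
    ((hexTab c).filter (fun h => hfV (addV p.1 p.2) ∈ h)).card = 2 := by decide
theorem D9' : ∀ c ∈ Fz, ∀ h ∈ hexTab c, h.card = 6 := by decide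

/-- All hexagons, via the table. -/
def AllHexT : Finset (Finset Z4) := Fz.biUnion hexTab

theorem AllHex_eq : AllHexZ = AllHexT := Finset.biUnion_congr rfl TAB
theorem D7' : AllHexT.card = 96 := by decide
theorem D8' : ∀ m ∈ Mz, (AllHexT.filter (fun h => m ∈ h)).card = 6 := by decide

theorem D5 : ∀ c ∈ Fz, (hexesZ c).card = 4 := fun c hc => by rw [TAB c hc]; exact D5' c hc
theorem D6 : ∀ c ∈ Fz, ∀ p ∈ EdgesZ, dotZ p.1 c = 4 → dotZ p.2 c = 4 →
    ((hexesZ c).filter (fun h => hfV (addV p.1 p.2) ∈ h)).card = 2 :=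
  fun c hc p hp h1 h2 => by rw [TAB c hc]; exact D6' c hc p hp h1 h2
theorem D7 : AllHexZ.card = 96 := by rw [AllHex_eq]; exact D7'
theorem D8 : ∀ m ∈ Mz, (AllHexZ.filter (fun h => m ∈ h)).card = 6 :=
  fun m hm => by rw [AllHex_eq]; exact D8' m hm
theorem D9 : ∀ c ∈ Fz, ∀ s ∈ faceZ c, (hexZ c s).card = 6 :=
  fun c hc s hs => D9' c hc (hexZ c s) (TAB c hc ▸ Finset.mem_image_of_mem (hexZ c) hs)
theorem D_even : ∀ a ∈ Vz, ∀ k, a k % 2 = 0 := by decide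

/-! ### Glue lemmas between the real sets and the integer model. -/

lemma iota_inj : Function.Injective ι := by
  intro a b h
  funext k
  have := congrFun h k
  simp only [ι] at this
  field_simp at this
  exact_mod_cast this

lemma dot4_iota (a b : Z4) : dot4 (ι a) (ι b) = (dotZ a b : ℝ) / 4 := by
  simp only [dot4, ι, dotZ, Fin.sum_univ_four]
  push_cast
  ring

lemma dot4_iota_one (a b : Z4) : dot4 (ι a) (ι b) = 1 ↔ dotZ a b = 4 := by
  rw [dot4_iota, div_eq_one_iff_eq (by norm_num : (4:ℝ) ≠ 0)]
  exact_mod_cast Iff.rfl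

lemma mem_vert_iff (v : Fin 4 → ℝ) : v ∈ Cell24Vertices ↔ ∃ z ∈ Vz, v = ι z := by
  constructor
  · rintro ⟨i, j, hij, hi, hj, h0⟩
    have mem : ∀ b1 b2 : Bool, mkV i j (2 * sg b1) (2 * sg b2) ∈ Vz := fun b1 b2 =>
      Finset.mem_image.2 ⟨((i, j), (b1, b2)), Finset.mem_filter.2 ⟨Finset.mem_univ _, hij⟩, rfl⟩
    rcases hi with h1 | h1 <;> rcases hj with h2 | h2
    · refine ⟨_, mem true true, ?_⟩
      funext k; simp only [ι, mkV]; split_ifs with hki hkj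
      · rw [hki, h1]; norm_num [sg]
      · rw [hkj, h2]; norm_num [sg]
      · rw [h0 k hki hkj]; norm_num
    · refine ⟨_, mem true false, ?_⟩
      funext k; simp only [ι, mkV]; split_ifs with hki hkj
      · rw [hki, h1]; norm_num [sg]
      · rw [hkj, h2]; norm_num [sg]
      · rw [h0 k hki hkj]; norm_num
    · refine ⟨_, mem false true, ?_⟩
      funext k; simp only [ι, mkV]; split_ifs with hki hkj
      · rw [hki, h1]; norm_num [sg]
      · rw [hkj, h2]; norm_num [sg]
      · rw [h0 k hki hkj]; norm_num
    · refine ⟨_, mem false false, ?_⟩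
      funext k; simp only [ι, mkV]; split_ifs with hki hkj
      · rw [hki, h1]; norm_num [sg]
      · rw [hkj, h2]; norm_num [sg]
      · rw [h0 k hki hkj]; norm_num
  · rintro ⟨z, hz, rfl⟩
    obtain ⟨⟨⟨i, j⟩, b1, b2⟩, hmem, rfl⟩ := Finset.mem_image.1 hz
    have hij : i ≠ j := (Finset.mem_filter.1 hmem).2
    refine ⟨i, j, hij, ?_, ?_, ?_⟩
    · cases b1 <;> norm_num [ι, mkV, sg]
    · cases b2 <;> norm_num [ι, mkV, sg, Ne.symm hij]
    · intro k hki hkj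
      norm_num [ι, mkV, hki, hkj]

lemma mem_facet_iff (c : Fin 4 → ℝ) : c ∈ Cell24Facets ↔ ∃ z ∈ Fz, c = ι z := by
  constructor
  · rintro (⟨i, hi, h0⟩ | hB)
    · have mem : ∀ b : Bool, mkV i i (2 * sg b) (2 * sg b) ∈ Fz := fun b =>
        Finset.mem_union_left _ (Finset.mem_image.2 ⟨(i, b), Finset.mem_univ _, rfl⟩)
      rcases hi with h1 | h1
      · refine ⟨_, mem true, ?_⟩
        funext k; simp only [ι, mkV]; split_ifs with hki
        · rw [hki, h1]; norm_num [sg]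
        · rw [h0 k hki]; norm_num
      · refine ⟨_, mem false, ?_⟩
        funext k; simp only [ι, mkV]; split_ifs with hki
        · rw [hki, h1]; norm_num [sg]
        · rw [h0 k hki]; norm_num
    · classical
      refine ⟨mkB (decide (c 0 = 1/2), decide (c 1 = 1/2), decide (c 2 = 1/2),
        decide (c 3 = 1/2)), Finset.mem_union_right _
          (Finset.mem_image.2 ⟨_, Finset.mem_univ _, rfl⟩), ?_⟩
      funext k
      fin_cases k <;>
        simp only [ι, mkB] <;> norm_num <;>
        [rcases hB 0 with h | h; rcases hB 1 with h | h; rcases hB 2 with h | h;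
          rcases hB 3 with h | h] <;>
        simp [h, sg] <;> norm_num
  · rintro ⟨z, hz, rfl⟩
    rcases Finset.mem_union.1 hz with hz | hz
    · obtain ⟨⟨i, b⟩, _, rfl⟩ := Finset.mem_image.1 hz
      left
      refine ⟨i, ?_, ?_⟩
      · cases b <;> norm_num [ι, mkV, sg]
      · intro k hk; norm_num [ι, mkV, hk]
    · obtain ⟨⟨b0, b1, b2, b3⟩, _, rfl⟩ := Finset.mem_image.1 hz
      right
      intro k
      fin_cases k <;> simp only [ι, mkB] <;> norm_num <;>
        [cases b0; cases b1; cases b2; cases b3] <;> simp [sg] <;> norm_num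

lemma adj_iff (u v : Fin 4 → ℝ) :
    Cell24Adj u v ↔ ∃ a ∈ Vz, ∃ b ∈ Vz, dotZ a b = 4 ∧ u = ι a ∧ v = ι b := by
  unfold Cell24Adj
  rw [mem_vert_iff, mem_vert_iff]
  constructor
  · rintro ⟨⟨a, ha, rfl⟩, ⟨b, hb, rfl⟩, hd⟩
    exact ⟨a, ha, b, hb, (dot4_iota_one a b).1 hd, rfl, rfl⟩
  · rintro ⟨a, ha, b, hb, hd, rfl, rfl⟩
    exact ⟨⟨a, ha, rfl⟩, ⟨b, hb, rfl⟩, (dot4_iota_one a b).2 hd⟩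

lemma iota_hf_add (a b : Z4) (ha : ∀ k, a k % 2 = 0) (hb : ∀ k, b k % 2 = 0) :
    ι (hfV (addV a b)) = (1 / 2 : ℝ) • (ι a + ι b) := by
  funext k
  obtain ⟨n, hn⟩ := Int.dvd_of_emod_eq_zero (ha k)
  obtain ⟨m, hm⟩ := Int.dvd_of_emod_eq_zero (hb k)
  simp only [ι, hfV, addV, Pi.smul_apply, Pi.add_apply, smul_eq_mul]
  rw [hn, hm, show (2 * n + 2 * m) / 2 = n + m by omega]
  push_cast
  ring

lemma iota_subdbl (c b : Z4) : ι (subV (dblV c) b) = (2 : ℝ) • ι c - ι b := by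
  funext k
  simp only [ι, subV, dblV, Pi.sub_apply, Pi.smul_apply, smul_eq_mul]
  push_cast
  ring

lemma subV_invol (c x : Z4) : subV (dblV c) (subV (dblV c) x) = x := by
  funext k
  simp only [subV, dblV]
  ring

lemma mid_iff (m : Fin 4 → ℝ) : Cell24Mid m ↔ ∃ z ∈ Mz, m = ι z := by
  constructor
  · rintro ⟨u, v, hadj, rfl⟩
    obtain ⟨a, ha, b, hb, hd, rfl, rfl⟩ := (adj_iff _ _).1 hadj
    exact ⟨hfV (addV a b), Finset.mem_image.2 ⟨(a, b), Finset.mem_filter.2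
      ⟨Finset.mem_product.2 ⟨ha, hb⟩, hd⟩, rfl⟩,
      (iota_hf_add a b (D_even a ha) (D_even b hb)).symm⟩
  · rintro ⟨z, hz, rfl⟩
    obtain ⟨⟨a, b⟩, hab, rfl⟩ := Finset.mem_image.1 hz
    obtain ⟨hmem, hd⟩ := Finset.mem_filter.1 hab
    obtain ⟨ha, hb⟩ := Finset.mem_product.1 hmem
    exact ⟨ι a, ι b, (adj_iff _ _).2 ⟨a, ha, b, hb, hd, rfl, rfl⟩,
      iota_hf_add a b (D_even a ha) (D_even b hb)⟩


lemma hex_eq (c : Z4) (s : Finset Z4) :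
    Cell24Hex (ι c) (ι '' ↑s) = ι '' ↑(hexZ c s) := by
  ext m
  simp only [Cell24Hex, Set.mem_setOf_eq]
  constructor
  · rintro ⟨u, w, hu, hw, hadj, rfl⟩
    obtain ⟨a, ha, b, hb, hd, rfl, rfl⟩ := (adj_iff _ _).1 hadj
    obtain ⟨a', ha's, ha'⟩ := hu
    have has : a ∈ s := Finset.mem_coe.1 (by rwa [iota_inj ha'] at ha's)
    rw [← iota_subdbl] at hw
    obtain ⟨x, hxs, hx⟩ := hw
    have hxb : x = subV (dblV c) b := iota_inj hx
    have hbx : subV (dblV c) x = b := by rw [hxb, subV_invol]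
    refine ⟨hfV (addV a b), ?_, iota_hf_add a b (D_even a ha) (D_even b hb)⟩
    refine Finset.mem_coe.2 (Finset.mem_image.2 ⟨(a, x), Finset.mem_filter.2
      ⟨Finset.mem_product.2 ⟨has, Finset.mem_coe.1 hxs⟩, ha,
        (by show subV (dblV c) x ∈ Vz; rw [hbx]; exact hb),
        (by show dotZ a (subV (dblV c) x) = 4; rw [hbx]; exact hd)⟩,
      (by show hfV (addV a (subV (dblV c) x)) = hfV (addV a b); rw [hbx])⟩)
  · rintro ⟨z, hz, rfl⟩
    obtain ⟨⟨a, x⟩, hmem, rfl⟩ := Finset.mem_image.1 (Finset.mem_coe.1 hz)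
    obtain ⟨hprod, ha, hbv, hd⟩ := Finset.mem_filter.1 hmem
    obtain ⟨has, hxs⟩ := Finset.mem_product.1 hprod
    refine ⟨ι a, ι (subV (dblV c) x), ⟨a, has, rfl⟩, ?_, ?_, ?_⟩
    · rw [← iota_subdbl]
      exact ⟨x, hxs, by rw [subV_invol]⟩
    · exact (adj_iff _ _).2 ⟨a, ha, _, hbv, hd, rfl, rfl⟩
    · exact iota_hf_add a _ (D_even a ha) (D_even _ hbv)

lemma dotZ_comm (a b : Z4) : dotZ a b = dotZ b a := by
  simp only [dotZ]; ring

lemma face_iff {c : Z4} (hc : c ∈ Fz) (t : Set (Fin 4 → ℝ)) :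
    Cell24Face (ι c) t ↔ ∃ s ∈ faceZ c, t = ι '' ↑s := by
  constructor
  · rintro ⟨-, u, v, w, huv, huw, hvw, rfl, hadj1, hadj2, hadj3, h1, h2, h3⟩
    obtain ⟨a, ha, b, hb, hdab, rfl, rfl⟩ := (adj_iff _ _).1 hadj1
    obtain ⟨a', ha', d, hd, hdad, haeq, rfl⟩ := (adj_iff _ _).1 hadj2
    have haa : a' = a := iota_inj haeq.symm
    subst haa
    have hdbd : dotZ b d = 4 := (dot4_iota_one b d).1 hadj3.2.2
    have hdac : dotZ a' c = 4 := (dot4_iota_one _ _).1 h1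
    have hdbc : dotZ b c = 4 := (dot4_iota_one _ _).1 h2
    have hddc : dotZ d c = 4 := (dot4_iota_one _ _).1 h3
    have hab : a' ≠ b := fun h => huv (by rw [h])
    have had : a' ≠ d := fun h => huw (by rw [h])
    have hbd : b ≠ d := fun h => hvw (by rw [h])
    refine ⟨{a', b, d}, ?_, ?_⟩
    · refine Finset.mem_filter.2 ⟨Finset.mem_powersetCard.2 ⟨?_, ?_⟩, ?_⟩
      · intro x hx
        simp only [Finset.mem_insert, Finset.mem_singleton] at hx
        rcases hx with rfl | rfl | rfl
        · exact Finset.mem_filter.2 ⟨ha', hdac⟩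
        · exact Finset.mem_filter.2 ⟨hb, hdbc⟩
        · exact Finset.mem_filter.2 ⟨hd, hddc⟩
      · exact Finset.card_eq_three.2 ⟨a', b, d, hab, had, hbd, rfl⟩
      · intro x hx y hy hxy
        simp only [Finset.mem_insert, Finset.mem_singleton] at hx hy
        rcases hx with rfl | rfl | rfl <;> rcases hy with rfl | rfl | rfl <;>
          first
            | exact absurd rfl hxy
            | assumption
            | (rw [dotZ_comm]; assumption)
    · simp only [Finset.coe_insert, Finset.coe_singleton, Set.image_insert_eq,
        Set.image_singleton]
  · rintro ⟨s, hs, rfl⟩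
    obtain ⟨hpow, hpair⟩ := Finset.mem_filter.1 hs
    obtain ⟨hsub, hcard⟩ := Finset.mem_powersetCard.1 hpow
    obtain ⟨a, b, d, hab, had, hbd, rfl⟩ := Finset.card_eq_three.1 hcard
    have hmema : a ∈ VonC c := hsub (by simp)
    have hmemb : b ∈ VonC c := hsub (by simp)
    have hmemd : d ∈ VonC c := hsub (by simp)
    obtain ⟨hav, hac⟩ := Finset.mem_filter.1 hmema
    obtain ⟨hbv, hbc⟩ := Finset.mem_filter.1 hmemb
    obtain ⟨hdv, hdc⟩ := Finset.mem_filter.1 hmemd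
    have hdab : dotZ a b = 4 := hpair a (by simp) b (by simp) hab
    have hdad : dotZ a d = 4 := hpair a (by simp) d (by simp) had
    have hdbd : dotZ b d = 4 := hpair b (by simp) d (by simp) hbd
    refine ⟨(mem_facet_iff _).2 ⟨c, hc, rfl⟩, ι a, ι b, ι d,
      fun h => hab (iota_inj h), fun h => had (iota_inj h), fun h => hbd (iota_inj h),
      ?_, ?_, ?_, ?_, (dot4_iota_one _ _).2 hac, (dot4_iota_one _ _).2 hbc,
      (dot4_iota_one _ _).2 hdc⟩
    · simp only [Finset.coe_insert, Finset.coe_singleton, Set.image_insert_eq,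
        Set.image_singleton]
    · exact (adj_iff _ _).2 ⟨a, hav, b, hbv, hdab, rfl, rfl⟩
    · exact (adj_iff _ _).2 ⟨a, hav, d, hdv, hdad, rfl, rfl⟩
    · exact (adj_iff _ _).2 ⟨b, hbv, d, hdv, hdbd, rfl, rfl⟩

/-- The interpretation of a finite set of integer vectors as a set of real vectors. -/
noncomputable def Jset (s : Finset Z4) : Set (Fin 4 → ℝ) := ι '' ↑s

lemma Jset_inj : Function.Injective Jset := fun s t h =>
  Finset.coe_injective ((Set.image_injective.2 iota_inj) h)

lemma ncard_Jset (G : Finset (Finset Z4)) : (Jset '' ↑G).ncard = G.card := by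
  rw [Set.ncard_image_of_injective _ Jset_inj, Set.ncard_coe_finset]

lemma ncard_iota (F : Finset Z4) : (ι '' ↑F).ncard = F.card := by
  rw [Set.ncard_image_of_injective _ iota_inj, Set.ncard_coe_finset]

/-- The regular 24-cell has 24 vertices, 24 octahedral facets and 96 edges; every edge
lies in exactly three facets.  Each octahedral facet carries 4 inscribed regular
hexagons through its edge-midpoints, and each edge-midpoint of a facet lies on exactly
2 of its 4 hexagons.  Altogether there are 96 inscribed hexagons; every edge-midpoint
lies on exactly 6 hexagons and every hexagon contains exactly 6 edge-midpoints, so the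
edge-midpoints and hexagons form a balanced combinatorial configuration of
type (96₆). -/
theorem cell24_96_6_configuration :
    Set.ncard Cell24Vertices = 24 ∧
    Set.ncard Cell24Facets = 24 ∧
    Set.ncard {m : Fin 4 → ℝ | Cell24Mid m} = 96 ∧
    (∀ u v, Cell24Adj u v →
      Set.ncard {c | c ∈ Cell24Facets ∧ dot4 u c = 1 ∧ dot4 v c = 1} = 3) ∧
    (∀ c ∈ Cell24Facets,
      Set.ncard {H : Set (Fin 4 → ℝ) | ∃ t, Cell24Face c t ∧ H = Cell24Hex c t} = 4) ∧
    (∀ c u v, c ∈ Cell24Facets → Cell24Adj u v → dot4 u c = 1 → dot4 v c = 1 →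
      Set.ncard {H : Set (Fin 4 → ℝ) |
        ∃ t, Cell24Face c t ∧ H = Cell24Hex c t ∧ (1 / 2 : ℝ) • (u + v) ∈ H} = 2) ∧
    Set.ncard {H : Set (Fin 4 → ℝ) | Cell24IsHex H} = 96 ∧
    (∀ m, Cell24Mid m →
      Set.ncard {H : Set (Fin 4 → ℝ) | Cell24IsHex H ∧ m ∈ H} = 6) ∧
    (∀ H : Set (Fin 4 → ℝ), Cell24IsHex H → Set.ncard H = 6) := by
  have hVset : Cell24Vertices = ι '' ↑Vz := by
    ext v
    rw [mem_vert_iff]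
    simp [Set.mem_image, eq_comm]
  have hFset : Cell24Facets = ι '' ↑Fz := by
    ext c
    rw [mem_facet_iff]
    simp [Set.mem_image, eq_comm]
  refine ⟨?_, ?_, ?_, ?_, ?_, ?_, ?_, ?_, ?_⟩
  · rw [hVset, ncard_iota, D1]
  · rw [hFset, ncard_iota, D2]
  · have : {m : Fin 4 → ℝ | Cell24Mid m} = ι '' ↑Mz := by
      ext m
      rw [Set.mem_setOf_eq, mid_iff]
      simp [Set.mem_image, eq_comm]
    rw [this, ncard_iota, D3]
  · intro u v hadj
    obtain ⟨a, ha, b, hb, hd, rfl, rfl⟩ := (adj_iff _ _).1 hadj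
    have hset : {c | c ∈ Cell24Facets ∧ dot4 (ι a) c = 1 ∧ dot4 (ι b) c = 1} =
        ι '' ↑(Fz.filter (fun z => dotZ a z = 4 ∧ dotZ b z = 4)) := by
      ext c
      simp only [Set.mem_setOf_eq, mem_facet_iff]
      constructor
      · rintro ⟨⟨z, hz, rfl⟩, h1, h2⟩
        exact ⟨z, Finset.mem_coe.2 (Finset.mem_filter.2 ⟨hz, (dot4_iota_one _ _).1 h1,
          (dot4_iota_one _ _).1 h2⟩), rfl⟩
      · rintro ⟨z, hz, rfl⟩
        obtain ⟨hzF, h1, h2⟩ := Finset.mem_filter.1 (Finset.mem_coe.1 hz)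
        exact ⟨⟨z, hzF, rfl⟩, (dot4_iota_one _ _).2 h1, (dot4_iota_one _ _).2 h2⟩
    rw [hset, ncard_iota]
    exact D4 (a, b) (Finset.mem_filter.2 ⟨Finset.mem_product.2 ⟨ha, hb⟩, hd⟩)
  · intro c hc
    obtain ⟨cz, hcz, rfl⟩ := (mem_facet_iff c).1 hc
    have hset : {H : Set (Fin 4 → ℝ) | ∃ t, Cell24Face (ι cz) t ∧ H = Cell24Hex (ι cz) t} =
        Jset '' ↑(hexesZ cz) := by
      ext H
      simp only [Set.mem_setOf_eq]
      constructor
      · rintro ⟨t, hF, rfl⟩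
        obtain ⟨s, hs, rfl⟩ := (face_iff hcz t).1 hF
        exact ⟨hexZ cz s, Finset.mem_coe.2 (Finset.mem_image_of_mem _ hs), (hex_eq cz s).symm⟩
      · rintro ⟨h, hh, rfl⟩
        obtain ⟨s, hs, rfl⟩ := Finset.mem_image.1 (Finset.mem_coe.1 hh)
        exact ⟨ι '' ↑s, (face_iff hcz _).2 ⟨s, hs, rfl⟩, (hex_eq cz s).symm⟩
    rw [hset, ncard_Jset]
    exact D5 cz hcz
  · intro c u v hc hadj h1 h2
    obtain ⟨cz, hcz, rfl⟩ := (mem_facet_iff c).1 hc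
    obtain ⟨a, ha, b, hb, hd, rfl, rfl⟩ := (adj_iff _ _).1 hadj
    have hmid : (1 / 2 : ℝ) • (ι a + ι b) = ι (hfV (addV a b)) :=
      (iota_hf_add a b (D_even a ha) (D_even b hb)).symm
    have hset : {H : Set (Fin 4 → ℝ) | ∃ t, Cell24Face (ι cz) t ∧ H = Cell24Hex (ι cz) t ∧
        (1 / 2 : ℝ) • (ι a + ι b) ∈ H} =
        Jset '' ↑((hexesZ cz).filter (fun h => hfV (addV a b) ∈ h)) := by
      ext H
      simp only [Set.mem_setOf_eq]
      constructor
      · rintro ⟨t, hF, rfl, hmem⟩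
        obtain ⟨s, hs, rfl⟩ := (face_iff hcz t).1 hF
        rw [hex_eq cz s, hmid] at hmem
        obtain ⟨z, hzs, hze⟩ := hmem
        have : z = hfV (addV a b) := iota_inj hze
        subst this
        exact ⟨hexZ cz s, Finset.mem_coe.2 (Finset.mem_filter.2
          ⟨Finset.mem_image_of_mem _ hs, hzs⟩), (hex_eq cz s).symm⟩
      · rintro ⟨h, hh, rfl⟩
        obtain ⟨hh', hmm⟩ := Finset.mem_filter.1 (Finset.mem_coe.1 hh)
        obtain ⟨s, hs, rfl⟩ := Finset.mem_image.1 hh'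
        refine ⟨ι '' ↑s, (face_iff hcz _).2 ⟨s, hs, rfl⟩, (hex_eq cz s).symm, ?_⟩
        rw [hmid]
        exact ⟨_, hmm, rfl⟩
    rw [hset, ncard_Jset]
    exact D6 cz hcz (a, b) (Finset.mem_filter.2 ⟨Finset.mem_product.2 ⟨ha, hb⟩, hd⟩)
      ((dot4_iota_one _ _).1 h1) ((dot4_iota_one _ _).1 h2)
  · have hset : {H : Set (Fin 4 → ℝ) | Cell24IsHex H} = Jset '' ↑AllHexZ := by
      ext H
      simp only [Set.mem_setOf_eq]
      constructor
      · rintro ⟨c, t, hF, rfl⟩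
        obtain ⟨cz, hcz, rfl⟩ := (mem_facet_iff c).1 hF.1
        obtain ⟨s, hs, rfl⟩ := (face_iff hcz t).1 hF
        exact ⟨hexZ cz s, Finset.mem_coe.2 (Finset.mem_biUnion.2
          ⟨cz, hcz, Finset.mem_image_of_mem _ hs⟩), (hex_eq cz s).symm⟩
      · rintro ⟨h, hh, rfl⟩
        obtain ⟨cz, hcz, hh'⟩ := Finset.mem_biUnion.1 (Finset.mem_coe.1 hh)
        obtain ⟨s, hs, rfl⟩ := Finset.mem_image.1 hh'
        exact ⟨ι cz, ι '' ↑s, (face_iff hcz _).2 ⟨s, hs, rfl⟩, (hex_eq cz s).symm⟩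
    rw [hset, ncard_Jset, D7]
  · intro m hm
    obtain ⟨mz, hmz, rfl⟩ := (mid_iff m).1 hm
    have hset : {H : Set (Fin 4 → ℝ) | Cell24IsHex H ∧ ι mz ∈ H} =
        Jset '' ↑(AllHexZ.filter (fun h => mz ∈ h)) := by
      ext H
      simp only [Set.mem_setOf_eq]
      constructor
      · rintro ⟨⟨c, t, hF, rfl⟩, hmem⟩
        obtain ⟨cz, hcz, rfl⟩ := (mem_facet_iff c).1 hF.1
        obtain ⟨s, hs, rfl⟩ := (face_iff hcz t).1 hF
        rw [hex_eq cz s] at hmem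
        obtain ⟨z, hzs, hze⟩ := hmem
        have : z = mz := iota_inj hze
        subst this
        exact ⟨hexZ cz s, Finset.mem_coe.2 (Finset.mem_filter.2 ⟨Finset.mem_biUnion.2
          ⟨cz, hcz, Finset.mem_image_of_mem _ hs⟩, hzs⟩), (hex_eq cz s).symm⟩
      · rintro ⟨h, hh, rfl⟩
        obtain ⟨hh', hmm⟩ := Finset.mem_filter.1 (Finset.mem_coe.1 hh)
        obtain ⟨cz, hcz, hh''⟩ := Finset.mem_biUnion.1 hh'
        obtain ⟨s, hs, rfl⟩ := Finset.mem_image.1 hh''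
        exact ⟨⟨ι cz, ι '' ↑s, (face_iff hcz _).2 ⟨s, hs, rfl⟩, (hex_eq cz s).symm⟩,
          ⟨mz, hmm, rfl⟩⟩
    rw [hset, ncard_Jset]
    exact D8 mz hmz
  · rintro H ⟨c, t, hF, rfl⟩
    obtain ⟨cz, hcz, rfl⟩ := (mem_facet_iff c).1 hF.1
    obtain ⟨s, hs, rfl⟩ := (face_iff hcz t).1 hF
    rw [hex_eq cz s, ncard_iota]
    exact D9 cz hcz s hs
end
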